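/- arXiv:2401.12774 — 15 statements merged into one kernel-verified Lean document; each statement's English description precedes it below -/
import Mathlib

section
/- Let f and g be twice differentiable on (a,b) with g'(x) ≠ 0 on (a,b). If g ≥ 0 on (a,b) and f'/g' is monotone increasing on (a,b), then the function Y_{f,g}(x) = (f'(x)/g'(x))·g(x) − f(x) is monotone increasing on (a,b). -/
open Set

/- Cauchy's mean value theorem gives `f y - f x = r c * (g y - g x)` with `r = f' / g'` and
`x < c < y`, so `Y y - Y x = (r y - r c) * g y + (r c - r x) * g x`, and both terms are
nonnegative because `r` is monotone and `g ≥ 0`. -/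

theorem monotoneOn_mul_sub_of_exists_mean_value {α 𝕜 : Type*} [PartialOrder α] [CommRing 𝕜]
    [PartialOrder 𝕜] [IsOrderedRing 𝕜] {s : Set α} {r f g : α → 𝕜}
    (hr : MonotoneOn r s) (hg : ∀ x ∈ s, 0 ≤ g x)
    (hmv : ∀ x ∈ s, ∀ y ∈ s, x < y →
      ∃ c ∈ s, x ≤ c ∧ c ≤ y ∧ f y - f x = r c * (g y - g x)) :
    MonotoneOn (fun x => r x * g x - f x) s := by
  refine monotoneOn_iff_forall_lt.2 fun x hx y hy hxy => ?_
  obtain ⟨c, hc, hxc, hcy, hmean⟩ := hmv x hx y hy hxy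
  have hleft : 0 ≤ (r c - r x) * g x := mul_nonneg (sub_nonneg.2 (hr hx hc hxc)) (hg x hx)
  have hright : 0 ≤ (r y - r c) * g y := mul_nonneg (sub_nonneg.2 (hr hc hy hcy)) (hg y hy)
  linear_combination hleft + hright + hmean

theorem exists_mem_Ioo_sub_eq_deriv_div_deriv_mul_sub {f g : ℝ → ℝ} {x y : ℝ} (hxy : x < y)
    (hf : DifferentiableOn ℝ f (Icc x y)) (hg : DifferentiableOn ℝ g (Icc x y))
    (hg0 : ∀ c ∈ Ioo x y, deriv g c ≠ 0) :
    ∃ c ∈ Ioo x y, f y - f x = deriv f c / deriv g c * (g y - g x) := by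
  obtain ⟨c, hc, hcauchy⟩ := exists_ratio_deriv_eq_ratio_slope f hxy hf.continuousOn
    (hf.mono Ioo_subset_Icc_self) g hg.continuousOn (hg.mono Ioo_subset_Icc_self)
  refine ⟨c, hc, ?_⟩
  field_simp [hg0 c hc]
  linear_combination -hcauchy

theorem Y_monotone_of_ratio_monotone_general (a b : ℝ) (f g : ℝ → ℝ)
    (hf : ∀ x ∈ Ioo a b, DifferentiableAt ℝ f x)
    (hg : ∀ x ∈ Ioo a b, DifferentiableAt ℝ g x)
    (hg0 : ∀ x ∈ Ioo a b, deriv g x ≠ 0)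
    (hgpos : ∀ x ∈ Ioo a b, 0 ≤ g x)
    (hmono : MonotoneOn (fun x => deriv f x / deriv g x) (Ioo a b)) :
    MonotoneOn (fun x => deriv f x / deriv g x * g x - f x) (Ioo a b) := by
  refine monotoneOn_mul_sub_of_exists_mean_value hmono hgpos fun x hx y hy hxy => ?_
  have hsub : Icc x y ⊆ Ioo a b := Icc_subset_Ioo hx.1 hy.2
  obtain ⟨c, hc, hmean⟩ := exists_mem_Ioo_sub_eq_deriv_div_deriv_mul_sub hxy
    (fun z hz => (hf z (hsub hz)).differentiableWithinAt)
    (fun z hz => (hg z (hsub hz)).differentiableWithinAt)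
    (fun z hz => hg0 z (hsub (Ioo_subset_Icc_self hz)))
  exact ⟨c, hsub (Ioo_subset_Icc_self hc), hc.1.le, hc.2.le, hmean⟩

theorem Y_monotone_of_ratio_monotone (a b : ℝ) (f g : ℝ → ℝ)
    (hf : ∀ x ∈ Ioo a b, DifferentiableAt ℝ f x)
    (hg : ∀ x ∈ Ioo a b, DifferentiableAt ℝ g x)
    (hf' : ∀ x ∈ Ioo a b, DifferentiableAt ℝ (deriv f) x)
    (hg' : ∀ x ∈ Ioo a b, DifferentiableAt ℝ (deriv g) x)
    (hg0 : ∀ x ∈ Ioo a b, deriv g x ≠ 0)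
    (hgpos : ∀ x ∈ Ioo a b, 0 ≤ g x)
    (hmono : MonotoneOn (fun x => deriv f x / deriv g x) (Ioo a b)) :
    MonotoneOn (fun x => deriv f x / deriv g x * g x - f x) (Ioo a b) :=
  Y_monotone_of_ratio_monotone_general a b f g hf hg hg0 hgpos hmono
end

section
/- Let f and g be twice differentiable on (a,b) with g'(x) ≠ 0 on (a,b). If g ≤ 0 on (a,b) and f'/g' is monotone increasing on (a,b), then Y_{f,g}(x) = (f'(x)/g'(x))·g(x) − f(x) is monotone decreasing on (a,b). -/
open Set

theorem Y_antitone_of_ratio_monotone (a b : ℝ) (f g : ℝ → ℝ)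
    (hf : ∀ x ∈ Ioo a b, DifferentiableAt ℝ f x)
    (hg : ∀ x ∈ Ioo a b, DifferentiableAt ℝ g x)
    (hf' : ∀ x ∈ Ioo a b, DifferentiableAt ℝ (deriv f) x)
    (hg' : ∀ x ∈ Ioo a b, DifferentiableAt ℝ (deriv g) x)
    (hg0 : ∀ x ∈ Ioo a b, deriv g x ≠ 0)
    (hgneg : ∀ x ∈ Ioo a b, g x ≤ 0)
    (hmono : MonotoneOn (fun x => deriv f x / deriv g x) (Ioo a b)) :
    AntitoneOn (fun x => deriv f x / deriv g x * g x - f x) (Ioo a b) := by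
  intro x hx y hy hxy
  rcases eq_or_lt_of_le hxy with rfl | hlt
  · exact le_refl _
  · have hsub : Icc x y ⊆ Ioo a b := Icc_subset_Ioo hx.1 hy.2
    have hsub' : Ioo x y ⊆ Ioo a b := fun z hz => hsub ⟨hz.1.le, hz.2.le⟩
    have hfc : ContinuousOn f (Icc x y) := fun z hz =>
      ((hf z (hsub hz)).continuousAt).continuousWithinAt
    have hgc : ContinuousOn g (Icc x y) := fun z hz =>
      ((hg z (hsub hz)).continuousAt).continuousWithinAt
    have hfd : DifferentiableOn ℝ f (Ioo x y) := fun z hz =>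
      (hf z (hsub' hz)).differentiableWithinAt
    have hgd : DifferentiableOn ℝ g (Ioo x y) := fun z hz =>
      (hg z (hsub' hz)).differentiableWithinAt
    obtain ⟨c, hc, hceq⟩ := exists_ratio_deriv_eq_ratio_slope f hlt hfc hfd g hgc hgd
    have hcab : c ∈ Ioo a b := hsub' hc
    have hgc0 : deriv g c ≠ 0 := hg0 c hcab
    have key : f y - f x = deriv f c / deriv g c * (g y - g x) := by
      field_simp
      linarith [hceq]
    have h1 : deriv f c / deriv g c ≤ deriv f y / deriv g y :=
      hmono hcab hy (le_of_lt hc.2)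
    have h2 : deriv f x / deriv g x ≤ deriv f c / deriv g c :=
      hmono hx hcab (le_of_lt hc.1)
    have hgy : g y ≤ 0 := hgneg y hy
    have hgx : g x ≤ 0 := hgneg x hx
    simp only
    nlinarith [mul_nonneg (sub_nonneg.2 h1) (neg_nonneg.2 hgy),
      mul_nonneg (sub_nonneg.2 h2) (neg_nonneg.2 hgx)]
end

section
/- Let f, g : (a,b] → ℝ be differentiable with g'(x) ≠ 0 for all x in (a,b]. If f'/g' is increasing on (a,b], then the function x ↦ (f(x) − f(a⁺))/(g(x) − g(a⁺)) is increasing on (a,b], where f(a⁺), g(a⁺) denote the right limits at a (assumed to exist); equivalently, for a < x < y ≤ b, (f(x)−f(a))/(g(x)−g(a)) ≤ (f(y)−f(a))/(g(y)−g(a)) when f, g extend continuously to [a,b]. -/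
open Set

theorem lhospital_monotonicity_left (a b : ℝ) (hab : a < b) (f g : ℝ → ℝ)
    (hfc : ContinuousOn f (Icc a b)) (hgc : ContinuousOn g (Icc a b))
    (hf : ∀ x ∈ Ioo a b, DifferentiableAt ℝ f x)
    (hg : ∀ x ∈ Ioo a b, DifferentiableAt ℝ g x)
    (hg' : ∀ x ∈ Ioo a b, deriv g x ≠ 0)
    (hmono : MonotoneOn (fun x => deriv f x / deriv g x) (Ioo a b)) :
    MonotoneOn (fun x => (f x - f a) / (g x - g a)) (Ioc a b) := by
  -- g is injective on [a,b]
  have hne : ∀ u v : ℝ, u ∈ Icc a b → v ∈ Icc a b → u < v → g u ≠ g v := by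
    intro u v hu hv huv heq
    obtain ⟨c, hc, hc0⟩ := exists_deriv_eq_zero huv
      (hgc.mono (Icc_subset_Icc hu.1 hv.2)) heq
    exact hg' c ⟨lt_of_le_of_lt hu.1 hc.1, lt_of_lt_of_le hc.2 hv.2⟩ hc0
  have hinj : InjOn g (Icc a b) := by
    intro u hu v hv huv
    rcases lt_trichotomy u v with h | h | h
    · exact absurd huv (hne u v hu hv h)
    · exact h
    · exact absurd huv.symm (hne v u hv hu h)
  have hmsign := ContinuousOn.strictMonoOn_of_injOn_Icc' hab.le hgc hinj
  -- main pairwise claim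
  intro x hx y hy hxy
  rcases eq_or_lt_of_le hxy with rfl | hxy
  · exact le_refl _
  simp only
  -- Cauchy MVT on [a,x]
  obtain ⟨c, hc, hcq⟩ : ∃ c ∈ Ioo a x, (g x - g a) * deriv f c = (f x - f a) * deriv g c :=
    exists_ratio_deriv_eq_ratio_slope f hx.1 (hfc.mono (Icc_subset_Icc le_rfl hx.2))
      (fun z hz => ((hf z ⟨hz.1, hz.2.trans_le hx.2⟩).differentiableWithinAt))
      g (hgc.mono (Icc_subset_Icc le_rfl hx.2))
      (fun z hz => ((hg z ⟨hz.1, hz.2.trans_le hx.2⟩).differentiableWithinAt))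
  obtain ⟨d, hd, hdq⟩ : ∃ d ∈ Ioo x y, (g y - g x) * deriv f d = (f y - f x) * deriv g d :=
    exists_ratio_deriv_eq_ratio_slope f hxy (hfc.mono (Icc_subset_Icc hx.1.le hy.2))
      (fun z hz => ((hf z ⟨hx.1.trans hz.1, hz.2.trans_le hy.2⟩).differentiableWithinAt))
      g (hgc.mono (Icc_subset_Icc hx.1.le hy.2))
      (fun z hz => ((hg z ⟨hx.1.trans hz.1, hz.2.trans_le hy.2⟩).differentiableWithinAt))
  have hcI : c ∈ Ioo a b := ⟨hc.1, hc.2.trans_le (hxy.le.trans hy.2)⟩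
  have hdI : d ∈ Ioo a b := ⟨hx.1.trans hd.1, hd.2.trans_le hy.2⟩
  have hcd : c ≤ d := (hc.2.trans hd.1).le
  have hrat : deriv f c / deriv g c ≤ deriv f d / deriv g d := hmono hcI hdI hcd
  set A := f x - f a with hA
  set B := f y - f x with hB
  set P := g x - g a with hP
  set Q := g y - g x with hQ
  have hAB : f y - f a = A + B := by ring
  have hPQ : g y - g a = P + Q := by ring
  rw [hAB, hPQ]
  have hgc' := hg' c hcI
  have hgd' := hg' d hdI
  -- sign cases
  have haI : a ∈ Icc a b := ⟨le_rfl, hab.le⟩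
  have hxI : x ∈ Icc a b := ⟨hx.1.le, hx.2⟩
  have hyI : y ∈ Icc a b := ⟨(hx.1.trans hxy).le, hy.2⟩
  rcases hmsign with hm | hm
  · have hPpos : 0 < P := sub_pos.2 (hm haI hxI hx.1)
    have hQpos : 0 < Q := sub_pos.2 (hm hxI hyI hxy)
    have h1 : A / P = deriv f c / deriv g c := by
      rw [div_eq_div_iff hPpos.ne' hgc']
      linarith [hcq]
    have h2 : B / Q = deriv f d / deriv g d := by
      rw [div_eq_div_iff hQpos.ne' hgd']
      linarith [hdq]
    have hle : A / P ≤ B / Q := by rw [h1, h2]; exact hrat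
    rw [div_le_div_iff₀ hPpos hQpos] at hle
    rw [div_le_div_iff₀ hPpos (by linarith)]
    nlinarith
  · have hPneg : P < 0 := sub_neg.2 (hm haI hxI hx.1)
    have hQneg : Q < 0 := sub_neg.2 (hm hxI hyI hxy)
    have h1 : A / P = deriv f c / deriv g c := by
      rw [div_eq_div_iff hPneg.ne hgc']
      linarith [hcq]
    have h2 : B / Q = deriv f d / deriv g d := by
      rw [div_eq_div_iff hQneg.ne hgd']
      linarith [hdq]
    have hle : A / P ≤ B / Q := by rw [h1, h2]; exact hrat
    have hle2 : (-A) / (-P) ≤ (-B) / (-Q) := by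
      rw [neg_div_neg_eq, neg_div_neg_eq]; exact hle
    have hle' : A * Q ≤ B * P := by
      have := (div_le_div_iff₀ (neg_pos.2 hPneg) (neg_pos.2 hQneg)).1 hle2
      nlinarith
    rw [show A / P = (-A) / (-P) by rw [neg_div_neg_eq],
        show (A + B) / (P + Q) = (-(A + B)) / (-(P + Q)) by rw [neg_div_neg_eq]]
    rw [div_le_div_iff₀ (by linarith) (by linarith)]
    nlinarith
end

section
/- Let f, g : ℝ → ℝ be continuous on [a,b] and differentiable on (a,b) with g'(x) ≠ 0 on (a,b). If f'/g' is increasing on (a,b), then the function x ↦ (f(x) − f(b))/(g(x) − g(b)) is increasing on [a,b). -/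
open Set

theorem lhospital_monotonicity_right (a b : ℝ) (hab : a < b) (f g : ℝ → ℝ)
    (hfc : ContinuousOn f (Icc a b)) (hgc : ContinuousOn g (Icc a b))
    (hf : ∀ x ∈ Ioo a b, DifferentiableAt ℝ f x)
    (hg : ∀ x ∈ Ioo a b, DifferentiableAt ℝ g x)
    (hg' : ∀ x ∈ Ioo a b, deriv g x ≠ 0)
    (hmono : MonotoneOn (fun x => deriv f x / deriv g x) (Ioo a b)) :
    MonotoneOn (fun x => (f x - f b) / (g x - g b)) (Ico a b) := by
  -- g' has constant sign on Ioo a b (Darboux)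
  have hdar : (∀ x ∈ Ioo a b, deriv g x < 0) ∨ ∀ x ∈ Ioo a b, 0 < deriv g x :=
    hasDerivWithinAt_forall_lt_or_forall_gt_of_forall_ne (convex_Ioo a b)
      (f' := deriv g) (fun x hx => ((hg x hx).hasDerivAt).hasDerivWithinAt) hg'
  -- g is strictly monotone or strictly antitone on Icc a b
  have hgs : StrictAntiOn g (Icc a b) ∨ StrictMonoOn g (Icc a b) := by
    rcases hdar with h | h
    · exact Or.inl <| strictAntiOn_of_deriv_neg (convex_Icc a b) hgc
        (fun x hx => h x (by rwa [interior_Icc] at hx))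
    · exact Or.inr <| strictMonoOn_of_deriv_pos (convex_Icc a b) hgc
        (fun x hx => h x (by rwa [interior_Icc] at hx))
  intro x hx y hy hxy
  rcases eq_or_lt_of_le hxy with rfl | hxy
  · exact le_refl _
  have hxI : x ∈ Icc a b := ⟨hx.1, hx.2.le⟩
  have hyI : y ∈ Icc a b := ⟨hy.1, hy.2.le⟩
  have hbI : b ∈ Icc a b := ⟨hab.le, le_rfl⟩
  -- Cauchy MVT on [x, y]
  have hsub1 : Icc x y ⊆ Icc a b := Icc_subset_Icc hx.1 hy.2.le
  have hsub1' : Ioo x y ⊆ Ioo a b := Ioo_subset_Ioo hx.1 hy.2.le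
  obtain ⟨c, hc, hc1⟩ := exists_ratio_deriv_eq_ratio_slope (f := f) (g := g)
    (hab := hxy) (hfc := hfc.mono hsub1) (hgc := hgc.mono hsub1)
    (hfd := fun t ht => (hf t (hsub1' ht)).differentiableWithinAt)
    (hgd := fun t ht => (hg t (hsub1' ht)).differentiableWithinAt)
  -- Cauchy MVT on [y, b]
  have hsub2 : Icc y b ⊆ Icc a b := Icc_subset_Icc hy.1 le_rfl
  have hsub2' : Ioo y b ⊆ Ioo a b := Ioo_subset_Ioo hy.1 le_rfl
  obtain ⟨d, hd, hd1⟩ := exists_ratio_deriv_eq_ratio_slope (f := f) (g := g)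
    (hab := hy.2) (hfc := hfc.mono hsub2) (hgc := hgc.mono hsub2)
    (hfd := fun t ht => (hf t (hsub2' ht)).differentiableWithinAt)
    (hgd := fun t ht => (hg t (hsub2' ht)).differentiableWithinAt)
  have hcab : c ∈ Ioo a b := hsub1' hc
  have hdab : d ∈ Ioo a b := hsub2' hd
  have hkey : deriv f c / deriv g c ≤ deriv f d / deriv g d :=
    hmono hcab hdab (hc.2.trans hd.1).le
  rcases hgs with h | h
  · -- g strictly antitone: g x > g y > g b
    have h1 : g y < g x := h hxI hyI hxy
    have h2 : g b < g y := h hyI hbI hy.2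
    have hqc : deriv f c / deriv g c = (f y - f x) / (g y - g x) := by
      rw [div_eq_div_iff (hg' c hcab) (by linarith : g y - g x ≠ 0)]
      linear_combination hc1
    have hqd : deriv f d / deriv g d = (f b - f y) / (g b - g y) := by
      rw [div_eq_div_iff (hg' d hdab) (by linarith : g b - g y ≠ 0)]
      linear_combination hd1
    rw [hqc, hqd] at hkey
    have e1 : (f y - f x) / (g y - g x) = (f x - f y) / (g x - g y) := by
      rw [← neg_div_neg_eq]; ring_nf
    have e2 : (f b - f y) / (g b - g y) = (f y - f b) / (g y - g b) := by
      rw [← neg_div_neg_eq]; ring_nf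
    rw [e1, e2, div_le_div_iff₀ (by linarith) (by linarith)] at hkey
    show (f x - f b) / (g x - g b) ≤ (f y - f b) / (g y - g b)
    rw [div_le_div_iff₀ (by linarith : (0:ℝ) < g x - g b) (by linarith : (0:ℝ) < g y - g b)]
    nlinarith [hkey]
  · -- g strictly monotone: g x < g y < g b
    have h1 : g x < g y := h hxI hyI hxy
    have h2 : g y < g b := h hyI hbI hy.2
    have hqc : deriv f c / deriv g c = (f y - f x) / (g y - g x) := by
      rw [div_eq_div_iff (hg' c hcab) (by linarith : g y - g x ≠ 0)]
      linear_combination hc1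
    have hqd : deriv f d / deriv g d = (f b - f y) / (g b - g y) := by
      rw [div_eq_div_iff (hg' d hdab) (by linarith : g b - g y ≠ 0)]
      linear_combination hd1
    rw [hqc, hqd, div_le_div_iff₀ (by linarith) (by linarith)] at hkey
    show (f x - f b) / (g x - g b) ≤ (f y - f b) / (g y - g b)
    have e1 : (f x - f b) / (g x - g b) = (f b - f x) / (g b - g x) := by
      rw [← neg_div_neg_eq]; ring_nf
    have e2 : (f y - f b) / (g y - g b) = (f b - f y) / (g b - g y) := by
      rw [← neg_div_neg_eq]; ring_nf
    rw [e1, e2, div_le_div_iff₀ (by linarith) (by linarith)]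
    nlinarith [hkey]
end

section
/- Let f, g be differentiable on (a,b) with g' nonvanishing and of constant sign on (a,b), and suppose f(x) → 0 and g(x) → 0 as x → a⁺. If f'/g' is increasing on (a,b), then f/g is increasing on (a,b). -/
open Set Filter

private lemma lhmr_aux (a b : ℝ) (hab : a < b) (f g : ℝ → ℝ)
    (hf : ∀ x ∈ Ioo a b, DifferentiableAt ℝ f x)
    (hg : ∀ x ∈ Ioo a b, DifferentiableAt ℝ g x)
    (hg' : ∀ x ∈ Ioo a b, 0 < deriv g x)
    (hfa : Tendsto f (nhdsWithin a (Ioi a)) (nhds 0))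
    (hga : Tendsto g (nhdsWithin a (Ioi a)) (nhds 0))
    (hmono : MonotoneOn (fun x => deriv f x / deriv g x) (Ioo a b)) :
    MonotoneOn (fun x => f x / g x) (Ioo a b) := by
  have hfc : ContinuousOn f (Ioo a b) := fun z hz => (hf z hz).continuousAt.continuousWithinAt
  have hgc : ContinuousOn g (Ioo a b) := fun z hz => (hg z hz).continuousAt.continuousWithinAt
  have hgs : StrictMonoOn g (Ioo a b) :=
    strictMonoOn_of_deriv_pos (convex_Ioo a b) hgc (by rwa [interior_Ioo])
  -- g is nonnegative on (a,b)
  have hgnn : ∀ x ∈ Ioo a b, 0 ≤ g x := by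
    intro x hx
    refine le_of_tendsto hga ?_
    filter_upwards [Ioo_mem_nhdsGT_of_mem ⟨le_refl a, hx.1⟩] with t ht
    exact (hgs ⟨ht.1, ht.2.trans hx.2⟩ hx ht.2).le
  have hgpos : ∀ x ∈ Ioo a b, 0 < g x := by
    intro x hx
    have htm : (a + x) / 2 ∈ Ioo a x := ⟨by linarith [hx.1], by linarith [hx.1]⟩
    have htm' : (a + x) / 2 ∈ Ioo a b := ⟨htm.1, htm.2.trans hx.2⟩
    exact lt_of_le_of_lt (hgnn _ htm') (hgs htm' hx htm.2)
  -- Cauchy MVT slope lemma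
  have cauchy : ∀ x ∈ Ioo a b, ∀ y ∈ Ioo a b, x < y →
      ∃ c ∈ Ioo x y, f y - f x = (deriv f c / deriv g c) * (g y - g x) := by
    intro x hx y hy hxy
    have hsub : Icc x y ⊆ Ioo a b := fun z hz => ⟨hx.1.trans_le hz.1, lt_of_le_of_lt hz.2 hy.2⟩
    have hsub' : Ioo x y ⊆ Ioo a b := fun z hz => ⟨hx.1.trans hz.1, hz.2.trans hy.2⟩
    obtain ⟨c, hc, hceq⟩ := exists_ratio_deriv_eq_ratio_slope f hxy (hfc.mono hsub)
      (fun z hz => (hf z (hsub' hz)).differentiableWithinAt) g (hgc.mono hsub)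
      (fun z hz => (hg z (hsub' hz)).differentiableWithinAt)
    refine ⟨c, hc, ?_⟩
    have hgc0 : deriv g c ≠ 0 := (hg' c (hsub' hc)).ne'
    field_simp
    linarith [hceq]
  intro x hx y hy hxy
  rcases eq_or_lt_of_le hxy with rfl | hxy
  · exact le_refl _
  obtain ⟨c, hc, hceq⟩ := cauchy x hx y hy hxy
  have hcmem : c ∈ Ioo a b := ⟨hx.1.trans hc.1, hc.2.trans hy.2⟩
  set q := deriv f c / deriv g c with hq
  -- Claim A : f x ≤ q * g x
  have claimA : f x ≤ q * g x := by
    have hphi : Tendsto (fun t => q * g t - f t) (nhdsWithin a (Ioi a)) (nhds 0) := by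
      have := (hga.const_mul q).sub hfa
      simpa using this
    have h0 : (0 : ℝ) ≤ q * g x - f x := by
      refine le_of_tendsto hphi ?_
      filter_upwards [Ioo_mem_nhdsGT_of_mem ⟨le_refl a, hx.1⟩] with t ht
      have htm : t ∈ Ioo a b := ⟨ht.1, ht.2.trans hx.2⟩
      obtain ⟨d, hd, hdeq⟩ := cauchy t htm x hx ht.2
      have hdm : d ∈ Ioo a b := ⟨ht.1.trans hd.1, hd.2.trans hx.2⟩
      have hdc : deriv f d / deriv g d ≤ q := hmono hdm hcmem (hd.2.trans hc.1).le
      have hgt : g t < g x := hgs htm hx ht.2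
      nlinarith [hdeq]
    linarith
  have hgx := hgpos x hx
  have hgy := hgpos y hy
  have hgxy : g x < g y := hgs hx hy hxy
  rw [div_le_div_iff₀ hgx hgy]
  nlinarith [claimA]

theorem lhospital_monotone_rule_zero_at_left (a b : ℝ) (hab : a < b) (f g : ℝ → ℝ)
    (hf : ∀ x ∈ Ioo a b, DifferentiableAt ℝ f x)
    (hg : ∀ x ∈ Ioo a b, DifferentiableAt ℝ g x)
    (hg' : (∀ x ∈ Ioo a b, 0 < deriv g x) ∨ (∀ x ∈ Ioo a b, deriv g x < 0))
    (hfa : Tendsto f (nhdsWithin a (Ioi a)) (nhds 0))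
    (hga : Tendsto g (nhdsWithin a (Ioi a)) (nhds 0))
    (hmono : MonotoneOn (fun x => deriv f x / deriv g x) (Ioo a b)) :
    MonotoneOn (fun x => f x / g x) (Ioo a b) := by
  rcases hg' with hpos | hneg
  · exact lhmr_aux a b hab f g hf hg hpos hfa hga hmono
  · have hdf : ∀ x ∈ Ioo a b, deriv (fun t => -f t) x = -deriv f x := by
      intro x hx
      simpa using deriv.neg (f := f) (x := x)
    have hdg : ∀ x ∈ Ioo a b, deriv (fun t => -g t) x = -deriv g x := by
      intro x hx
      simpa using deriv.neg (f := g) (x := x)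
    have key := lhmr_aux a b hab (fun t => -f t) (fun t => -g t)
      (fun x hx => (hf x hx).neg) (fun x hx => (hg x hx).neg)
      (fun x hx => by rw [hdg x hx]; linarith [hneg x hx])
      (by simpa using hfa.neg) (by simpa using hga.neg)
      (by
        intro x hx y hy hxy
        have := hmono hx hy hxy
        simp only [hdf x hx, hdg x hx, hdf y hy, hdg y hy, neg_div_neg_eq]
        exact this)
    intro x hx y hy hxy
    have := key hx hy hxy
    simpa [neg_div_neg_eq] using this
end

section
/- Let f, g be differentiable on (a,b) with g' nonvanishing on (a,b), and suppose f(x) → 0 and g(x) → 0 as x → b⁻. If f'/g' is decreasing on (a,b), then f/g is decreasing on (a,b). -/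
/-!
Since `g'` does not vanish it has constant sign (Darboux), so `g` is strictly monotone and,
tending to `0` at `b`, satisfies `g · g' < 0` on `(a, b)`. Cauchy's mean value theorem on `(x, b)`,
with the boundary values `f(b⁻) = g(b⁻) = 0`, gives `f x / g x = f' c / g' c` for some `c > x`,
hence `f / g ≤ f' / g'` because `f' / g'` is decreasing. Finally
`(f / g)' = g g' (f' / g' - f / g) / g² ≤ 0`.
-/

open Set Filter Topology

lemma StrictMonoOn.gt_of_tendsto_nhdsLT {g : ℝ → ℝ} {a b l x : ℝ}
    (hg : StrictMonoOn g (Ioo a b)) (hl : Tendsto g (𝓝[<] b) (𝓝 l)) (hx : x ∈ Ioo a b) :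
    g x < l := by
  obtain ⟨y, hxy, hyb⟩ := exists_between hx.2
  have hy : y ∈ Ioo a b := ⟨hx.1.trans hxy, hyb⟩
  have hgy : g y ≤ l := ge_of_tendsto hl <| by
    filter_upwards [Ioo_mem_nhdsLT hyb] with z hz
    exact (hg hy ⟨hy.1.trans hz.1, hz.2⟩ hz.1).le
  exact (hg hx hy hxy).trans_le hgy

lemma StrictAntiOn.lt_of_tendsto_nhdsLT {g : ℝ → ℝ} {a b l x : ℝ}
    (hg : StrictAntiOn g (Ioo a b)) (hl : Tendsto g (𝓝[<] b) (𝓝 l)) (hx : x ∈ Ioo a b) :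
    l < g x :=
  neg_lt_neg_iff.1 (hg.neg.gt_of_tendsto_nhdsLT hl.neg hx)

section

variable {f g : ℝ → ℝ} {a b : ℝ}

lemma mul_deriv_neg_of_tendsto_nhdsLT_zero (hg' : ∀ x ∈ Ioo a b, deriv g x ≠ 0)
    (hgb : Tendsto g (𝓝[<] b) (𝓝 0)) {x : ℝ} (hx : x ∈ Ioo a b) : g x * deriv g x < 0 := by
  have hdg : ∀ y ∈ Ioo a b, DifferentiableAt ℝ g y := fun y hy =>
    differentiableAt_of_deriv_ne_zero (hg' y hy)
  have hcont : ContinuousOn g (Ioo a b) := fun y hy =>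
    (hdg y hy).continuousAt.continuousWithinAt
  rcases hasDerivWithinAt_forall_lt_or_forall_gt_of_forall_ne (convex_Ioo a b)
      (fun y hy => (hdg y hy).hasDerivAt.hasDerivWithinAt) hg' with hneg | hpos
  · have hanti := strictAntiOn_of_deriv_neg (convex_Ioo a b) hcont (by rwa [interior_Ioo])
    exact mul_neg_of_pos_of_neg (hanti.lt_of_tendsto_nhdsLT hgb hx) (hneg x hx)
  · have hmono := strictMonoOn_of_deriv_pos (convex_Ioo a b) hcont (by rwa [interior_Ioo])
    exact mul_neg_of_neg_of_pos (hmono.gt_of_tendsto_nhdsLT hgb hx) (hpos x hx)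

lemma exists_div_eq_deriv_div_of_tendsto_nhdsLT_zero
    (hf : ∀ x ∈ Ioo a b, DifferentiableAt ℝ f x) (hg' : ∀ x ∈ Ioo a b, deriv g x ≠ 0)
    (hfb : Tendsto f (𝓝[<] b) (𝓝 0)) (hgb : Tendsto g (𝓝[<] b) (𝓝 0))
    {x : ℝ} (hx : x ∈ Ioo a b) (hgx : g x ≠ 0) :
    ∃ c ∈ Ioo x b, f x / g x = deriv f c / deriv g c := by
  have hsub : Ioo x b ⊆ Ioo a b := Ioo_subset_Ioo_left hx.1.le
  have hdg : ∀ y ∈ Ioo a b, DifferentiableAt ℝ g y := fun y hy =>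
    differentiableAt_of_deriv_ne_zero (hg' y hy)
  obtain ⟨c, hc, hcauchy⟩ := exists_ratio_deriv_eq_ratio_slope' f hx.2 g
    (fun y hy => (hf y (hsub hy)).differentiableWithinAt)
    (fun y hy => (hdg y (hsub hy)).differentiableWithinAt)
    ((hf x hx).continuousAt.tendsto.mono_left nhdsWithin_le_nhds)
    ((hdg x hx).continuousAt.tendsto.mono_left nhdsWithin_le_nhds) hfb hgb
  refine ⟨c, hc, ?_⟩
  rw [div_eq_div_iff hgx (hg' c (hsub hc))]
  linarith

end

lemma deriv_div_nonpos_of_div_le_deriv_div {f g : ℝ → ℝ} {x : ℝ} (hf : DifferentiableAt ℝ f x)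
    (hgg' : g x * deriv g x < 0) (hle : f x / g x ≤ deriv f x / deriv g x) :
    deriv (fun y => f y / g y) x ≤ 0 := by
  have hgx : g x ≠ 0 := left_ne_zero_of_mul hgg'.ne
  have hg'x : deriv g x ≠ 0 := right_ne_zero_of_mul hgg'.ne
  have hnum : deriv f x * g x - f x * deriv g x =
      g x * deriv g x * (deriv f x / deriv g x - f x / g x) := by
    field_simp
  rw [deriv_fun_div hf (differentiableAt_of_deriv_ne_zero hg'x) hgx, hnum]
  exact div_nonpos_of_nonpos_of_nonneg
    (mul_nonpos_of_nonpos_of_nonneg hgg'.le (sub_nonneg.2 hle)) (sq_nonneg _)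

theorem lhospital_antitone_rule_zero_at_right_general (a b : ℝ) (f g : ℝ → ℝ)
    (hf : ∀ x ∈ Ioo a b, DifferentiableAt ℝ f x)
    (hg' : ∀ x ∈ Ioo a b, deriv g x ≠ 0)
    (hfb : Tendsto f (nhdsWithin b (Iio b)) (nhds 0))
    (hgb : Tendsto g (nhdsWithin b (Iio b)) (nhds 0))
    (hanti : AntitoneOn (fun x => deriv f x / deriv g x) (Ioo a b)) :
    AntitoneOn (fun x => f x / g x) (Ioo a b) := by
  have hgg' : ∀ x ∈ Ioo a b, g x * deriv g x < 0 := fun x hx =>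
    mul_deriv_neg_of_tendsto_nhdsLT_zero hg' hgb hx
  have hgx : ∀ x ∈ Ioo a b, g x ≠ 0 := fun x hx => left_ne_zero_of_mul (hgg' x hx).ne
  have hle : ∀ x ∈ Ioo a b, f x / g x ≤ deriv f x / deriv g x := fun x hx => by
    obtain ⟨c, hc, hfgc⟩ :=
      exists_div_eq_deriv_div_of_tendsto_nhdsLT_zero hf hg' hfb hgb hx (hgx x hx)
    exact hfgc ▸ hanti hx ⟨hx.1.trans hc.1, hc.2⟩ hc.1.le
  have hdiff : DifferentiableOn ℝ (fun x => f x / g x) (Ioo a b) := fun x hx =>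
    (hf x hx).differentiableWithinAt.div
      (differentiableAt_of_deriv_ne_zero (hg' x hx)).differentiableWithinAt (hgx x hx)
  refine antitoneOn_of_deriv_nonpos (convex_Ioo a b) hdiff.continuousOn ?_ ?_ <;>
    rw [interior_Ioo]
  · exact hdiff
  · exact fun x hx => deriv_div_nonpos_of_div_le_deriv_div (hf x hx) (hgg' x hx) (hle x hx)

theorem lhospital_antitone_rule_zero_at_right (a b : ℝ) (hab : a < b) (f g : ℝ → ℝ)
    (hf : ∀ x ∈ Ioo a b, DifferentiableAt ℝ f x)
    (hg : ∀ x ∈ Ioo a b, DifferentiableAt ℝ g x)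
    (hg' : ∀ x ∈ Ioo a b, deriv g x ≠ 0)
    (hfb : Tendsto f (nhdsWithin b (Iio b)) (nhds 0))
    (hgb : Tendsto g (nhdsWithin b (Iio b)) (nhds 0))
    (hanti : AntitoneOn (fun x => deriv f x / deriv g x) (Ioo a b)) :
    AntitoneOn (fun x => f x / g x) (Ioo a b) :=
  lhospital_antitone_rule_zero_at_right_general a b f g hf hg' hfb hgb hanti
end

section
/- Let f, g : ℝ → ℝ be positive and continuous on [0,∞) such that f/g is decreasing on (0,∞). Then the function x ↦ (∫₀ˣ f(t) dt)/(∫₀ˣ g(t) dt) is decreasing on (0,∞). -/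
/-! With `c = f x / g x`, monotonicity of `f / g` gives `f ≤ c g` on `[x, y]` and `c g ≤ f` on
`(0, x]`. Integrating, `∫ₓʸ f ≤ c ∫ₓʸ g` and `c ∫₀ˣ g ≤ ∫₀ˣ f`, so the increment `∫ₓʸ f / ∫ₓʸ g`
is at most `∫₀ˣ f / ∫₀ˣ g`, and adding it to the fraction (a mediant) can only decrease it. -/

open Set intervalIntegral MeasureTheory

theorem add_div_add_le_div_of_le_mul {F G I J c : ℝ} (hG : 0 < G) (hJ : 0 ≤ J)
    (hI : I ≤ c * J) (hF : c * G ≤ F) : (F + I) / (G + J) ≤ F / G := by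
  rw [div_le_div_iff₀ (by linarith) hG]
  nlinarith [mul_le_mul_of_nonneg_right hI hG.le, mul_le_mul_of_nonneg_right hF hJ]

section RatioOfIntegrals

variable {f g : ℝ → ℝ} {a : ℝ}

theorem le_div_mul_of_antitoneOn_div (hg : ∀ t ∈ Ioi a, 0 < g t)
    (hfg : AntitoneOn (fun t => f t / g t) (Ioi a)) {s t : ℝ} (hs : a < s) (hst : s ≤ t) :
    f t ≤ f s / g s * g t := by
  have ht : a < t := hs.trans_le hst
  calc f t = f t / g t * g t := (div_mul_cancel₀ _ (hg t ht).ne').symm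
    _ ≤ f s / g s * g t := mul_le_mul_of_nonneg_right (hfg hs ht hst) (hg t ht).le

theorem div_mul_le_of_antitoneOn_div (hg : ∀ t ∈ Ioi a, 0 < g t)
    (hfg : AntitoneOn (fun t => f t / g t) (Ioi a)) {s t : ℝ} (hs : a < s) (hst : s ≤ t) :
    f t / g t * g s ≤ f s := by
  calc f t / g t * g s ≤ f s / g s * g s :=
      mul_le_mul_of_nonneg_right (hfg hs (hs.trans_le hst) hst) (hg s hs).le
    _ = f s := div_mul_cancel₀ _ (hg s hs).ne'

theorem integral_le_div_mul_integral_of_antitoneOn_div (hg : ∀ t ∈ Ioi a, 0 < g t)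
    (hfg : AntitoneOn (fun t => f t / g t) (Ioi a)) {x y : ℝ}
    (hf_int : IntervalIntegrable f volume x y) (hg_int : IntervalIntegrable g volume x y)
    (hx : a < x) (hxy : x ≤ y) :
    ∫ t in x..y, f t ≤ f x / g x * ∫ t in x..y, g t := by
  simpa only [intervalIntegral.integral_const_mul] using
    integral_mono_on hxy hf_int (hg_int.const_mul _) fun t ht =>
      le_div_mul_of_antitoneOn_div hg hfg hx ht.1

theorem div_mul_integral_le_integral_of_antitoneOn_div (hg : ∀ t ∈ Ioi a, 0 < g t)
    (hfg : AntitoneOn (fun t => f t / g t) (Ioi a)) {x : ℝ}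
    (hf_int : IntervalIntegrable f volume a x) (hg_int : IntervalIntegrable g volume a x)
    (hx : a < x) :
    f x / g x * ∫ t in a..x, g t ≤ ∫ t in a..x, f t := by
  simpa only [intervalIntegral.integral_const_mul] using
    integral_mono_on_of_le_Ioo hx.le (hg_int.const_mul _) hf_int fun s hs =>
      div_mul_le_of_antitoneOn_div hg hfg hs.1 hs.2.le

theorem antitoneOn_integral_div_integral (hf_int : ∀ x ∈ Ioi a, IntervalIntegrable f volume a x)
    (hg_int : ∀ x ∈ Ioi a, IntervalIntegrable g volume a x) (hg : ∀ t ∈ Ioi a, 0 < g t)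
    (hfg : AntitoneOn (fun t => f t / g t) (Ioi a)) :
    AntitoneOn (fun x => (∫ t in a..x, f t) / (∫ t in a..x, g t)) (Ioi a) := by
  intro x hx y hy hxy
  have hf_xy : IntervalIntegrable f volume x y := (hf_int x hx).symm.trans (hf_int y hy)
  have hg_xy : IntervalIntegrable g volume x y := (hg_int x hx).symm.trans (hg_int y hy)
  have hG : 0 < ∫ t in a..x, g t :=
    intervalIntegral_pos_of_pos_on (hg_int x hx) (fun t ht => hg t ht.1) hx
  have hJ : 0 ≤ ∫ t in x..y, g t :=
    integral_nonneg hxy fun t ht => (hg t (hx.trans_le ht.1)).le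
  simp only [← integral_add_adjacent_intervals (hf_int x hx) hf_xy,
    ← integral_add_adjacent_intervals (hg_int x hx) hg_xy]
  exact add_div_add_le_div_of_le_mul hG hJ
    (integral_le_div_mul_integral_of_antitoneOn_div hg hfg hf_xy hg_xy hx hxy)
    (div_mul_integral_le_integral_of_antitoneOn_div hg hfg (hf_int x hx) (hg_int x hx) hx)

end RatioOfIntegrals

theorem cheeger_gromov_taylor_general (f g : ℝ → ℝ)
    (hfc : ContinuousOn f (Ici 0)) (hgc : ContinuousOn g (Ici 0))
    (hgpos : ∀ x ∈ Ici (0 : ℝ), 0 < g x)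
    (hanti : AntitoneOn (fun x => f x / g x) (Ioi 0)) :
    AntitoneOn (fun x => (∫ t in (0 : ℝ)..x, f t) / (∫ t in (0 : ℝ)..x, g t)) (Ioi 0) := by
  have h_int : ∀ {h : ℝ → ℝ}, ContinuousOn h (Ici 0) →
      ∀ x ∈ Ioi (0 : ℝ), IntervalIntegrable h volume 0 x := fun hc x hx =>
    (hc.mono (by rw [uIcc_of_le hx.le]; exact Icc_subset_Ici_self)).intervalIntegrable
  exact antitoneOn_integral_div_integral (h_int hfc) (h_int hgc)
    (fun t ht => hgpos t (mem_Ici.2 ht.le)) hanti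

theorem cheeger_gromov_taylor (f g : ℝ → ℝ)
    (hfc : ContinuousOn f (Ici 0)) (hgc : ContinuousOn g (Ici 0))
    (hfpos : ∀ x ∈ Ici (0 : ℝ), 0 < f x) (hgpos : ∀ x ∈ Ici (0 : ℝ), 0 < g x)
    (hanti : AntitoneOn (fun x => f x / g x) (Ioi 0)) :
    AntitoneOn (fun x => (∫ t in (0 : ℝ)..x, f t) / (∫ t in (0 : ℝ)..x, g t)) (Ioi 0) :=
  cheeger_gromov_taylor_general f g hfc hgc hgpos hanti
end

section
/- Let f, g be differentiable on [a,b] with g > 0 on [a,b] and g' > 0 on [a,b). Define Y_{f,g}(x) = (f'(x)/g'(x))·g(x) − f(x). If f'/g' is increasing on [a,b] and Y_{f,g}(a) ≥ 0, then f/g is increasing on [a,b]. -/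
/-!
For `x ∈ [a, b]` the function `t ↦ (f'/g')(x) · g t - f t` has derivative
`g'(t) · ((f'/g')(x) - (f'/g')(t)) ≥ 0` on `(a, x)`, so comparing its values at `a` and `x` gives
`Y(x) ≥ (f'/g')(x) · g(a) - f(a) ≥ Y(a) ≥ 0`. Since `(f/g)' = g' · Y / g²`, the ratio `f/g` is
increasing.
-/

open Set

noncomputable def yFunction (f g : ℝ → ℝ) (x : ℝ) : ℝ :=
  deriv f x / deriv g x * g x - f x

theorem monotoneOn_const_mul_sub_of_div_deriv_le {D : Set ℝ} (hD : Convex ℝ D) {f g : ℝ → ℝ}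
    {c : ℝ} (hf : ∀ x ∈ D, DifferentiableAt ℝ f x) (hg : ∀ x ∈ D, DifferentiableAt ℝ g x)
    (hg' : ∀ x ∈ interior D, 0 < deriv g x)
    (hc : ∀ x ∈ interior D, deriv f x / deriv g x ≤ c) :
    MonotoneOn (fun t => c * g t - f t) D := by
  have hdiff : ∀ x ∈ D, DifferentiableAt ℝ (fun t => c * g t - f t) x := fun x hx =>
    ((hg x hx).const_mul c).sub (hf x hx)
  refine monotoneOn_of_deriv_nonneg hD (fun x hx => (hdiff x hx).continuousAt.continuousWithinAt)
    (fun x hx => (hdiff x (interior_subset hx)).differentiableWithinAt) fun x hx => ?_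
  have hx' := interior_subset hx
  have hderiv : deriv (fun t => c * g t - f t) x = deriv g x * (c - deriv f x / deriv g x) := by
    rw [deriv_fun_sub ((hg x hx').const_mul c) (hf x hx'), deriv_const_mul _ (hg x hx')]
    field_simp [(hg' x hx).ne']
  rw [hderiv]
  exact mul_nonneg (hg' x hx).le (sub_nonneg.2 (hc x hx))

theorem yFunction_nonneg_of_monotoneOn {a b : ℝ} {f g : ℝ → ℝ}
    (hf : ∀ x ∈ Icc a b, DifferentiableAt ℝ f x) (hg : ∀ x ∈ Icc a b, DifferentiableAt ℝ g x)
    (hga : 0 < g a) (hg' : ∀ x ∈ Ico a b, 0 < deriv g x)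
    (hmono : MonotoneOn (fun x => deriv f x / deriv g x) (Icc a b)) (hYa : 0 ≤ yFunction f g a)
    {x : ℝ} (hx : x ∈ Icc a b) : 0 ≤ yFunction f g x := by
  have hsub : Icc a x ⊆ Icc a b := Icc_subset_Icc_right hx.2
  have hint : ∀ t ∈ interior (Icc a x), t ∈ Ico a b := by
    rw [interior_Icc]
    exact fun t ht => ⟨ht.1.le, ht.2.trans_le hx.2⟩
  have hmono_x := monotoneOn_const_mul_sub_of_div_deriv_le (convex_Icc a x)
    (fun t ht => hf t (hsub ht)) (fun t ht => hg t (hsub ht)) (fun t ht => hg' t (hint t ht))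
    (c := deriv f x / deriv g x) fun t ht =>
      hmono (Ico_subset_Icc_self (hint t ht)) hx (interior_subset ht).2
  have hax : a ∈ Icc a x := left_mem_Icc.2 hx.1
  calc 0 ≤ yFunction f g a := hYa
    _ ≤ deriv f x / deriv g x * g a - f a :=
      sub_le_sub_right (mul_le_mul_of_nonneg_right
        (hmono (left_mem_Icc.2 (hx.1.trans hx.2)) hx hx.1) hga.le) _
    _ ≤ yFunction f g x := hmono_x hax (right_mem_Icc.2 hx.1) hx.1

theorem deriv_div_eq_deriv_mul_yFunction {f g : ℝ → ℝ} {x : ℝ} (hf : DifferentiableAt ℝ f x)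
    (hg : DifferentiableAt ℝ g x) (hgx : g x ≠ 0) (hg'x : deriv g x ≠ 0) :
    deriv (fun y => f y / g y) x = deriv g x * yFunction f g x / g x ^ 2 := by
  rw [deriv_fun_div hf hg hgx, yFunction]
  field_simp

theorem monotoneOn_div_of_yFunction_nonneg {D : Set ℝ} (hD : Convex ℝ D) {f g : ℝ → ℝ}
    (hf : ∀ x ∈ D, DifferentiableAt ℝ f x) (hg : ∀ x ∈ D, DifferentiableAt ℝ g x)
    (hgpos : ∀ x ∈ D, 0 < g x) (hg' : ∀ x ∈ interior D, 0 < deriv g x)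
    (hY : ∀ x ∈ interior D, 0 ≤ yFunction f g x) :
    MonotoneOn (fun x => f x / g x) D := by
  have hdiff : ∀ x ∈ D, DifferentiableAt ℝ (fun y => f y / g y) x := fun x hx =>
    (hf x hx).div (hg x hx) (hgpos x hx).ne'
  refine monotoneOn_of_deriv_nonneg hD (fun x hx => (hdiff x hx).continuousAt.continuousWithinAt)
    (fun x hx => (hdiff x (interior_subset hx)).differentiableWithinAt) fun x hx => ?_
  have hx' := interior_subset hx
  rw [deriv_div_eq_deriv_mul_yFunction (hf x hx') (hg x hx') (hgpos x hx').ne' (hg' x hx).ne']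
  exact div_nonneg (mul_nonneg (hg' x hx).le (hY x hx)) (sq_nonneg _)

theorem second_kind_rule_increasing_general (a b : ℝ) (f g : ℝ → ℝ)
    (hf : ∀ x ∈ Icc a b, DifferentiableAt ℝ f x)
    (hg : ∀ x ∈ Icc a b, DifferentiableAt ℝ g x)
    (hgpos : ∀ x ∈ Icc a b, 0 < g x)
    (hg' : ∀ x ∈ Ico a b, 0 < deriv g x)
    (hmono : MonotoneOn (fun x => deriv f x / deriv g x) (Icc a b))
    (hYa : 0 ≤ deriv f a / deriv g a * g a - f a) :
    MonotoneOn (fun x => f x / g x) (Icc a b) := by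
  have hIoo : ∀ x ∈ interior (Icc a b), x ∈ Ico a b := by
    rw [interior_Icc]
    exact fun x hx => Ioo_subset_Ico_self hx
  refine monotoneOn_div_of_yFunction_nonneg (convex_Icc a b) hf hg hgpos
    (fun x hx => hg' x (hIoo x hx)) fun x hx => ?_
  have hab : a ≤ b := (hIoo x hx).1.trans (hIoo x hx).2.le
  exact yFunction_nonneg_of_monotoneOn hf hg (hgpos a (left_mem_Icc.2 hab)) hg' hmono hYa
    (Ico_subset_Icc_self (hIoo x hx))

theorem second_kind_rule_increasing (a b : ℝ) (hab : a < b) (f g : ℝ → ℝ)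
    (hf : ∀ x ∈ Icc a b, DifferentiableAt ℝ f x)
    (hg : ∀ x ∈ Icc a b, DifferentiableAt ℝ g x)
    (hgpos : ∀ x ∈ Icc a b, 0 < g x)
    (hg' : ∀ x ∈ Ico a b, 0 < deriv g x)
    (hmono : MonotoneOn (fun x => deriv f x / deriv g x) (Icc a b))
    (hYa : 0 ≤ deriv f a / deriv g a * g a - f a) :
    MonotoneOn (fun x => f x / g x) (Icc a b) :=
  second_kind_rule_increasing_general a b f g hf hg hgpos hg' hmono hYa
end

section
/- Let f, g be differentiable on [a,b] with g > 0 on [a,b] and g' > 0 on [a,b). Define Y_{f,g}(x) = (f'(x)/g'(x))·g(x) − f(x). If f'/g' is increasing on [a,b] and Y_{f,g}(b) ≤ 0, then f/g is decreasing on [a,b]. -/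
/-!
With `r = f' / g'` and `Y = r g - f`, the quotient rule reads `(f / g)' = g' Y / g²`, so it suffices
that `Y ≤ 0` on `(a, b)`. This follows from `Y(b) ≤ 0` once `Y` is increasing: for `x < y`,
`f - r(y) g` has derivative `g' (r - r(y)) ≤ 0` on `(x, y)`, whence
`Y(x) ≤ r(y) g(x) - f(x) ≤ r(y) g(y) - f(y) = Y(y)`.
-/

open Set

noncomputable section

/-- The paper's `Y_{f,g}`. -/
def lHospitalY (f g : ℝ → ℝ) (x : ℝ) : ℝ := deriv f x / deriv g x * g x - f x

variable {f g : ℝ → ℝ} {a b : ℝ}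

theorem sub_le_mul_sub_of_deriv_div_le {K : ℝ} (hab : a ≤ b)
    (hfc : ContinuousOn f (Icc a b)) (hgc : ContinuousOn g (Icc a b))
    (hf : ∀ x ∈ Ioo a b, DifferentiableAt ℝ f x) (hg : ∀ x ∈ Ioo a b, DifferentiableAt ℝ g x)
    (hg' : ∀ x ∈ Ioo a b, 0 < deriv g x) (hK : ∀ x ∈ Ioo a b, deriv f x / deriv g x ≤ K) :
    f b - f a ≤ K * (g b - g a) := by
  have hanti : AntitoneOn (fun x => f x - K * g x) (Icc a b) := by
    apply antitoneOn_of_deriv_nonpos (f := fun x => f x - K * g x) (convex_Icc a b)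
      (hfc.sub (continuousOn_const.mul hgc))
    · rw [interior_Icc]
      exact fun x hx => ((hf x hx).sub ((hg x hx).const_mul K)).differentiableWithinAt
    · rw [interior_Icc]
      intro x hx
      rw [deriv_fun_sub (hf x hx) ((hg x hx).const_mul K), deriv_const_mul K (hg x hx)]
      have := (div_le_iff₀ (hg' x hx)).1 (hK x hx)
      linarith
  have := hanti (left_mem_Icc.2 hab) (right_mem_Icc.2 hab) hab
  linarith

theorem monotoneOn_lHospitalY (hf : ∀ x ∈ Icc a b, DifferentiableAt ℝ f x)
    (hg : ∀ x ∈ Icc a b, DifferentiableAt ℝ g x) (hg_nonneg : ∀ x ∈ Icc a b, 0 ≤ g x)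
    (hg' : ∀ x ∈ Ioo a b, 0 < deriv g x)
    (hmono : MonotoneOn (fun x => deriv f x / deriv g x) (Icc a b)) :
    MonotoneOn (lHospitalY f g) (Icc a b) := by
  intro x hx y hy hxy
  have hsub : Icc x y ⊆ Icc a b := Icc_subset_Icc hx.1 hy.2
  have hsub' : Ioo x y ⊆ Ioo a b := Ioo_subset_Ioo hx.1 hy.2
  have hslope : f y - f x ≤ deriv f y / deriv g y * (g y - g x) :=
    sub_le_mul_sub_of_deriv_div_le hxy
      (fun t ht => (hf t (hsub ht)).continuousAt.continuousWithinAt)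
      (fun t ht => (hg t (hsub ht)).continuousAt.continuousWithinAt)
      (fun t ht => hf t (hsub (Ioo_subset_Icc_self ht)))
      (fun t ht => hg t (hsub (Ioo_subset_Icc_self ht)))
      (fun t ht => hg' t (hsub' ht))
      (fun t ht => hmono (hsub (Ioo_subset_Icc_self ht)) hy ht.2.le)
  have hratio : deriv f x / deriv g x * g x ≤ deriv f y / deriv g y * g x :=
    mul_le_mul_of_nonneg_right (hmono hx hy hxy) (hg_nonneg x hx)
  unfold lHospitalY
  linarith

theorem deriv_div_eq_mul_lHospitalY {x : ℝ} (hf : DifferentiableAt ℝ f x)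
    (hg : DifferentiableAt ℝ g x) (hgx : g x ≠ 0) (hg'x : deriv g x ≠ 0) :
    deriv (fun y => f y / g y) x = deriv g x * lHospitalY f g x / g x ^ 2 := by
  rw [deriv_fun_div hf hg hgx, lHospitalY]
  field_simp

theorem antitoneOn_div_of_lHospitalY_nonpos (hf : ∀ x ∈ Icc a b, DifferentiableAt ℝ f x)
    (hg : ∀ x ∈ Icc a b, DifferentiableAt ℝ g x) (hg_ne : ∀ x ∈ Icc a b, g x ≠ 0)
    (hg' : ∀ x ∈ Ioo a b, 0 < deriv g x) (hY : ∀ x ∈ Ioo a b, lHospitalY f g x ≤ 0) :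
    AntitoneOn (fun x => f x / g x) (Icc a b) := by
  apply antitoneOn_of_deriv_nonpos (convex_Icc a b)
  · exact fun x hx => ((hf x hx).div (hg x hx) (hg_ne x hx)).continuousAt.continuousWithinAt
  · rw [interior_Icc]
    exact fun x hx => ((hf x (Ioo_subset_Icc_self hx)).div (hg x (Ioo_subset_Icc_self hx))
      (hg_ne x (Ioo_subset_Icc_self hx))).differentiableWithinAt
  · rw [interior_Icc]
    intro x hx
    have hxI := Ioo_subset_Icc_self hx
    rw [deriv_div_eq_mul_lHospitalY (hf x hxI) (hg x hxI) (hg_ne x hxI) (hg' x hx).ne']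
    exact div_nonpos_of_nonpos_of_nonneg
      (mul_nonpos_of_nonneg_of_nonpos (hg' x hx).le (hY x hx)) (sq_nonneg _)

end

theorem second_kind_rule_decreasing_general (a b : ℝ) (f g : ℝ → ℝ)
    (hf : ∀ x ∈ Icc a b, DifferentiableAt ℝ f x)
    (hg : ∀ x ∈ Icc a b, DifferentiableAt ℝ g x)
    (hgpos : ∀ x ∈ Icc a b, 0 < g x)
    (hg' : ∀ x ∈ Ico a b, 0 < deriv g x)
    (hmono : MonotoneOn (fun x => deriv f x / deriv g x) (Icc a b))
    (hYb : deriv f b / deriv g b * g b - f b ≤ 0) :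
    AntitoneOn (fun x => f x / g x) (Icc a b) := by
  have hg'_Ioo : ∀ x ∈ Ioo a b, 0 < deriv g x := fun x hx => hg' x (Ioo_subset_Ico_self hx)
  have hY_mono := monotoneOn_lHospitalY hf hg (fun x hx => (hgpos x hx).le) hg'_Ioo hmono
  refine antitoneOn_div_of_lHospitalY_nonpos hf hg (fun x hx => (hgpos x hx).ne') hg'_Ioo ?_
  intro x hx
  have hb : b ∈ Icc a b := ⟨hx.1.le.trans hx.2.le, le_rfl⟩
  exact (hY_mono (Ioo_subset_Icc_self hx) hb hx.2.le).trans hYb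

theorem second_kind_rule_decreasing (a b : ℝ) (hab : a < b) (f g : ℝ → ℝ)
    (hf : ∀ x ∈ Icc a b, DifferentiableAt ℝ f x)
    (hg : ∀ x ∈ Icc a b, DifferentiableAt ℝ g x)
    (hgpos : ∀ x ∈ Icc a b, 0 < g x)
    (hg' : ∀ x ∈ Ico a b, 0 < deriv g x)
    (hmono : MonotoneOn (fun x => deriv f x / deriv g x) (Icc a b))
    (hYb : deriv f b / deriv g b * g b - f b ≤ 0) :
    AntitoneOn (fun x => f x / g x) (Icc a b) :=
  second_kind_rule_decreasing_general a b f g hf hg hgpos hg' hmono hYb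
end

section
/- Let f, g be twice differentiable on [a,b] with g > 0 on [a,b] and g' > 0 on [a,b). Define Y_{f,g}(x) = (f'(x)/g'(x))·g(x) − f(x). If f'/g' is increasing on [a,b], Y_{f,g}(a) ≤ 0, and Y_{f,g}(b) ≥ 0, then there exists x₀ ∈ [a,b] such that f/g is decreasing on [a,x₀] and increasing on [x₀,b]. -/
/-!
Write `h = f'/g'` and `Y = h g - f`. For `x < y` in `[a, b]`, Cauchy's mean value theorem gives
`f y - f x = h ξ (g y - g x)` for some `ξ ∈ (x, y)`, hence
`Y y - Y x = (h y - h ξ) g y + (h ξ - h x) g x ≥ 0`, so `Y` is monotone on `[a, b]`.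
Since `(f/g)' = g' Y / g²` with `g' > 0`, the quotient decreases while `Y ≤ 0` and increases
once `Y ≥ 0`; by monotonicity of `Y` these regions are an initial and a final segment of `[a, b]`.
-/

open Set

theorem MonotoneOn.exists_crossing_Icc {α β : Type*} [ConditionallyCompleteLinearOrder α]
    [LinearOrder β] {Y : α → β} {a b : α} (hY : MonotoneOn Y (Icc a b)) (hab : a ≤ b)
    (t : β) :
    ∃ c ∈ Icc a b, (∀ x ∈ Ico a c, Y x ≤ t) ∧ ∀ x ∈ Ioc c b, t ≤ Y x := by
  set S := {x ∈ Icc a b | ∀ y ∈ Ico a x, Y y ≤ t}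
  have haS : a ∈ S := ⟨left_mem_Icc.2 hab, fun y hy => absurd hy.2 (not_lt.2 hy.1)⟩
  have hS : BddAbove S := ⟨b, fun x hx => hx.1.2⟩
  refine ⟨sSup S, ⟨le_csSup hS haS, csSup_le ⟨a, haS⟩ fun x hx => hx.1.2⟩, ?_, ?_⟩
  · intro x hx
    obtain ⟨s, hs, hxs⟩ := exists_lt_of_lt_csSup ⟨a, haS⟩ hx.2
    exact hs.2 x ⟨hx.1, hxs⟩
  · intro x hx
    by_contra! hxt
    have hxS : x ∈ S := by
      refine ⟨⟨(le_csSup hS haS).trans hx.1.le, hx.2⟩, fun y hy => ?_⟩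
      exact (hY ⟨hy.1, hy.2.le.trans hx.2⟩ ⟨hy.1.trans hy.2.le, hx.2⟩ hy.2.le).trans hxt.le
    exact hx.1.not_ge (le_csSup hS hxS)

theorem monotoneOn_yFunction {a b : ℝ} {f g : ℝ → ℝ}
    (hfc : ContinuousOn f (Icc a b)) (hfd : DifferentiableOn ℝ f (Ioo a b))
    (hgc : ContinuousOn g (Icc a b)) (hgd : DifferentiableOn ℝ g (Ioo a b))
    (hg : ∀ x ∈ Icc a b, 0 ≤ g x) (hg' : ∀ x ∈ Ioo a b, deriv g x ≠ 0)
    (hmono : MonotoneOn (fun x => deriv f x / deriv g x) (Icc a b)) :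
    MonotoneOn (yFunction f g) (Icc a b) := by
  intro x hx y hy hxy
  rcases hxy.eq_or_lt with rfl | hxy
  · rfl
  have hsub : Icc x y ⊆ Icc a b := Icc_subset_Icc hx.1 hy.2
  obtain ⟨ξ, hξ, hcauchy⟩ := exists_ratio_deriv_eq_ratio_slope (f := f) (g := g) hxy
    (hfc.mono hsub) (hfd.mono (Ioo_subset_Ioo hx.1 hy.2)) (hgc.mono hsub)
    (hgd.mono (Ioo_subset_Ioo hx.1 hy.2))
  have hξ' : ξ ∈ Icc a b := hsub (Ioo_subset_Icc_self hξ)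
  set h := fun x => deriv f x / deriv g x
  have hf_incr : f y - f x = h ξ * (g y - g x) := by
    have := hg' ξ ⟨hx.1.trans_lt hξ.1, hξ.2.trans_le hy.2⟩
    simp only [h]
    field_simp
    linarith
  have hY : yFunction f g y - yFunction f g x = (h y - h ξ) * g y + (h ξ - h x) * g x := by
    simp only [yFunction]
    linear_combination -hf_incr
  rw [← sub_nonneg, hY]
  exact add_nonneg (mul_nonneg (sub_nonneg.2 (hmono hξ' hy hξ.2.le)) (hg y hy))
    (mul_nonneg (sub_nonneg.2 (hmono hx hξ' hξ.1.le)) (hg x hx))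

theorem hasDerivAt_div_yFunction {f g : ℝ → ℝ} {x : ℝ} (hf : DifferentiableAt ℝ f x)
    (hg : DifferentiableAt ℝ g x) (hgx : g x ≠ 0) (hg'x : deriv g x ≠ 0) :
    HasDerivAt (fun y => f y / g y) (deriv g x * yFunction f g x / g x ^ 2) x := by
  refine (hf.hasDerivAt.fun_div hg.hasDerivAt hgx).congr_deriv ?_
  rw [yFunction]
  field_simp

theorem antitoneOn_monotoneOn_of_hasDerivAt {a b c : ℝ} {q q' : ℝ → ℝ} (hc : c ∈ Icc a b)
    (hqc : ContinuousOn q (Icc a b)) (hq : ∀ x ∈ Ioo a b, HasDerivAt q (q' x) x)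
    (hneg : ∀ x ∈ Ioo a c, q' x ≤ 0) (hpos : ∀ x ∈ Ioo c b, 0 ≤ q' x) :
    AntitoneOn q (Icc a c) ∧ MonotoneOn q (Icc c b) := by
  constructor
  · refine antitoneOn_of_hasDerivWithinAt_nonpos (f' := q') (convex_Icc a c)
      (hqc.mono (Icc_subset_Icc_right hc.2)) (fun x hx => ?_) (fun x hx => ?_) <;>
      rw [interior_Icc] at hx
    exacts [(hq x ⟨hx.1, hx.2.trans_le hc.2⟩).hasDerivWithinAt, hneg x hx]
  · refine monotoneOn_of_hasDerivWithinAt_nonneg (f' := q') (convex_Icc c b)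
      (hqc.mono (Icc_subset_Icc_left hc.1)) (fun x hx => ?_) (fun x hx => ?_) <;>
      rw [interior_Icc] at hx
    exacts [(hq x ⟨hc.1.trans_lt hx.1, hx.2⟩).hasDerivWithinAt, hpos x hx]

theorem second_kind_rule_piecewise_general (a b : ℝ) (hab : a < b) (f g : ℝ → ℝ)
    (hf : ∀ x ∈ Icc a b, DifferentiableAt ℝ f x)
    (hg : ∀ x ∈ Icc a b, DifferentiableAt ℝ g x)
    (hgpos : ∀ x ∈ Icc a b, 0 < g x)
    (hg' : ∀ x ∈ Ico a b, 0 < deriv g x)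
    (hmono : MonotoneOn (fun x => deriv f x / deriv g x) (Icc a b)) :
    ∃ x₀ ∈ Icc a b,
      AntitoneOn (fun x => f x / g x) (Icc a x₀) ∧
      MonotoneOn (fun x => f x / g x) (Icc x₀ b) := by
  have hg'pos : ∀ x ∈ Ioo a b, 0 < deriv g x := fun x hx => hg' x (Ioo_subset_Ico_self hx)
  have hY : MonotoneOn (yFunction f g) (Icc a b) :=
    monotoneOn_yFunction (fun x hx => (hf x hx).continuousAt.continuousWithinAt)
      (fun x hx => (hf x (Ioo_subset_Icc_self hx)).differentiableWithinAt)
      (fun x hx => (hg x hx).continuousAt.continuousWithinAt)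
      (fun x hx => (hg x (Ioo_subset_Icc_self hx)).differentiableWithinAt)
      (fun x hx => (hgpos x hx).le) (fun x hx => (hg'pos x hx).ne') hmono
  obtain ⟨c, hc, hYneg, hYpos⟩ := hY.exists_crossing_Icc hab.le 0
  refine ⟨c, hc, antitoneOn_monotoneOn_of_hasDerivAt hc
    (fun x hx => ((hf x hx).continuousAt.div (hg x hx).continuousAt
      (hgpos x hx).ne').continuousWithinAt)
    (fun x hx => hasDerivAt_div_yFunction (hf x (Ioo_subset_Icc_self hx))
      (hg x (Ioo_subset_Icc_self hx)) (hgpos x (Ioo_subset_Icc_self hx)).ne' (hg'pos x hx).ne')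
    (fun x hx => ?_) (fun x hx => ?_)⟩
  · exact div_nonpos_of_nonpos_of_nonneg (mul_nonpos_of_nonneg_of_nonpos
      (hg'pos x ⟨hx.1, hx.2.trans_le hc.2⟩).le (hYneg x (Ioo_subset_Ico_self hx))) (sq_nonneg _)
  · exact div_nonneg (mul_nonneg (hg'pos x ⟨hc.1.trans_lt hx.1, hx.2⟩).le
      (hYpos x (Ioo_subset_Ioc_self hx))) (sq_nonneg _)

theorem second_kind_rule_piecewise (a b : ℝ) (hab : a < b) (f g : ℝ → ℝ)
    (hf : ∀ x ∈ Icc a b, DifferentiableAt ℝ f x)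
    (hg : ∀ x ∈ Icc a b, DifferentiableAt ℝ g x)
    (hf' : ∀ x ∈ Icc a b, DifferentiableAt ℝ (deriv f) x)
    (hg'' : ∀ x ∈ Icc a b, DifferentiableAt ℝ (deriv g) x)
    (hgpos : ∀ x ∈ Icc a b, 0 < g x)
    (hg' : ∀ x ∈ Ico a b, 0 < deriv g x)
    (hmono : MonotoneOn (fun x => deriv f x / deriv g x) (Icc a b))
    (hYa : deriv f a / deriv g a * g a - f a ≤ 0)
    (hYb : 0 ≤ deriv f b / deriv g b * g b - f b) :
    ∃ x₀ ∈ Icc a b,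
      AntitoneOn (fun x => f x / g x) (Icc a x₀) ∧
      MonotoneOn (fun x => f x / g x) (Icc x₀ b) :=
  second_kind_rule_piecewise_general a b hab f g hf hg hgpos hg' hmono
end

section
/- Let f, g be twice differentiable on [a,b] with g > 0 on [a,b] and g' > 0 on [a,b). Define Y_{f,g}(x) = (f'(x)/g'(x))·g(x) − f(x). If f'/g' is decreasing on [a,b], Y_{f,g}(a) ≥ 0, and Y_{f,g}(b) ≤ 0, then there exists x₀ ∈ [a,b] such that f/g is increasing on [a,x₀] and decreasing on [x₀,b]. -/
open Set

open Filter Topology in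
private lemma antitoneOn_deriv_nonpos' {h : ℝ → ℝ} {a b x : ℝ}
    (hh : AntitoneOn h (Icc a b)) (hx : x ∈ Ioo a b) (hd : DifferentiableAt ℝ h x) :
    deriv h x ≤ 0 := by
  have hslope : Tendsto (slope h x) (𝓝[>] x) (𝓝 (deriv h x)) :=
    ((hasDerivAt_iff_tendsto_slope.1 hd.hasDerivAt).mono_left
      (nhdsWithin_mono x fun y hy => ne_of_gt hy))
  refine le_of_tendsto hslope ?_
  filter_upwards [Ioo_mem_nhdsGT_of_mem ⟨le_refl x, hx.2⟩] with y hy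
  have hxy : x < y := hy.1
  have h1 : h y ≤ h x := hh ⟨hx.1.le, hx.2.le⟩ ⟨hx.1.le.trans hxy.le, hy.2.le⟩ hxy.le
  have : slope h x y = (h y - h x) / (y - x) := by rw [slope_def_field]
  rw [this]
  exact div_nonpos_of_nonpos_of_nonneg (by linarith) (by linarith)

theorem second_kind_rule_piecewise' (a b : ℝ) (hab : a < b) (f g : ℝ → ℝ)
    (hf : ∀ x ∈ Icc a b, DifferentiableAt ℝ f x)
    (hg : ∀ x ∈ Icc a b, DifferentiableAt ℝ g x)
    (hf' : ∀ x ∈ Icc a b, DifferentiableAt ℝ (deriv f) x)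
    (hg'' : ∀ x ∈ Icc a b, DifferentiableAt ℝ (deriv g) x)
    (hgpos : ∀ x ∈ Icc a b, 0 < g x)
    (hg' : ∀ x ∈ Ico a b, 0 < deriv g x)
    (hanti : AntitoneOn (fun x => deriv f x / deriv g x) (Icc a b))
    (hYa : 0 ≤ deriv f a / deriv g a * g a - f a)
    (hYb : deriv f b / deriv g b * g b - f b ≤ 0) :
    ∃ x₀ ∈ Icc a b,
      MonotoneOn (fun x => f x / g x) (Icc a x₀) ∧
      AntitoneOn (fun x => f x / g x) (Icc x₀ b) := by
  set h : ℝ → ℝ := fun x => deriv f x / deriv g x with hh_def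
  set Y : ℝ → ℝ := fun x => h x * g x - f x with hY_def
  have hsub : Ico a b ⊆ Icc a b := Ico_subset_Icc_self
  have hg'ne : ∀ x ∈ Ico a b, deriv g x ≠ 0 := fun x hx => (hg' x hx).ne'
  have hhdiff : ∀ x ∈ Ico a b, DifferentiableAt ℝ h x := fun x hx =>
    (hf' x (hsub hx)).div (hg'' x (hsub hx)) (hg'ne x hx)
  have hYdiff : ∀ x ∈ Ico a b, DifferentiableAt ℝ Y x := fun x hx =>
    ((hhdiff x hx).mul (hg x (hsub hx))).sub (hf x (hsub hx))
  -- derivative of Y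
  have hYderiv : ∀ x ∈ Ioo a b, deriv Y x = deriv h x * g x := by
    intro x hx
    have hx' : x ∈ Ico a b := ⟨hx.1.le, hx.2⟩
    have h1 : HasDerivAt Y (deriv h x * g x + h x * deriv g x - deriv f x) x :=
      (((hhdiff x hx').hasDerivAt.mul (hg x (hsub hx')).hasDerivAt)).sub
        (hf x (hsub hx')).hasDerivAt
    have h2 : h x * deriv g x = deriv f x := div_mul_cancel₀ _ (hg'ne x hx')
    rw [h1.deriv, h2]; ring
  have hYderiv_nonpos : ∀ x ∈ Ioo a b, deriv Y x ≤ 0 := by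
    intro x hx
    rw [hYderiv x hx]
    exact mul_nonpos_of_nonpos_of_nonneg
      (antitoneOn_deriv_nonpos' hanti hx (hhdiff x ⟨hx.1.le, hx.2⟩))
      (hgpos x ⟨hx.1.le, hx.2.le⟩).le
  have hYanti : AntitoneOn Y (Ico a b) := by
    apply antitoneOn_of_deriv_nonpos (convex_Ico a b)
    · exact fun x hx => (hYdiff x hx).continuousAt.continuousWithinAt
    · rw [interior_Ico]
      exact fun x hx => ((hYdiff x ⟨hx.1.le, hx.2⟩).differentiableWithinAt)
    · rw [interior_Ico]; exact hYderiv_nonpos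
  -- choice of x₀
  set S : Set ℝ := insert a {x ∈ Ico a b | 0 ≤ Y x} with hS_def
  have haS : a ∈ S := mem_insert _ _
  have hbdd : ∀ x ∈ S, x ≤ b := by
    rintro x (rfl | hx)
    · exact hab.le
    · exact hx.1.2.le
  have hbddA : BddAbove S := ⟨b, hbdd⟩
  set x₀ : ℝ := sSup S with hx₀_def
  have hax₀ : a ≤ x₀ := le_csSup hbddA haS
  have hx₀b : x₀ ≤ b := csSup_le ⟨a, haS⟩ hbdd
  refine ⟨x₀, ⟨hax₀, hx₀b⟩, ?_, ?_⟩
  · -- monotone on [a, x₀]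
    apply monotoneOn_of_deriv_nonneg (convex_Icc a x₀)
    · exact fun x hx =>
        (((hf x ⟨hx.1, hx.2.trans hx₀b⟩).div (hg x ⟨hx.1, hx.2.trans hx₀b⟩)
          (hgpos x ⟨hx.1, hx.2.trans hx₀b⟩).ne')).continuousAt.continuousWithinAt
    · rw [interior_Icc]
      intro x hx
      have hx' : x ∈ Icc a b := ⟨hx.1.le, hx.2.le.trans hx₀b⟩
      exact ((hf x hx').div (hg x hx') (hgpos x hx').ne').differentiableWithinAt
    · rw [interior_Icc]
      intro x hx
      have hxb : x < b := lt_of_lt_of_le hx.2 hx₀b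
      have hx' : x ∈ Ico a b := ⟨hx.1.le, hxb⟩
      have hxI : x ∈ Icc a b := hsub hx'
      -- Y x ≥ 0
      obtain ⟨z, hzS, hxz⟩ := exists_lt_of_lt_csSup ⟨a, haS⟩ hx.2
      have hzIco : z ∈ Ico a b ∧ 0 ≤ Y z := by
        rcases hzS with rfl | hz
        · exact absurd hxz (not_lt.2 hx.1.le)
        · exact ⟨hz.1, hz.2⟩
      have hYx : 0 ≤ Y x := le_trans hzIco.2 (hYanti hx' hzIco.1 hxz.le)
      -- derivative formula
      have hd : HasDerivAt (fun x => f x / g x)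
          ((deriv f x * g x - f x * deriv g x) / g x ^ 2) x :=
        (hf x hxI).hasDerivAt.div (hg x hxI).hasDerivAt (hgpos x hxI).ne'
      rw [hd.deriv]
      have hc : deriv f x / deriv g x * deriv g x = deriv f x :=
        div_mul_cancel₀ _ (hg'ne x hx')
      have hnum : deriv f x * g x - f x * deriv g x = deriv g x * Y x := by
        simp only [hY_def, hh_def]
        linear_combination (-(g x)) * hc
      rw [hnum]
      exact div_nonneg (mul_nonneg (hg' x hx').le hYx) (sq_nonneg _)
  · -- antitone on [x₀, b]
    apply antitoneOn_of_deriv_nonpos (convex_Icc x₀ b)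
    · exact fun x hx =>
        (((hf x ⟨hax₀.trans hx.1, hx.2⟩).div (hg x ⟨hax₀.trans hx.1, hx.2⟩)
          (hgpos x ⟨hax₀.trans hx.1, hx.2⟩).ne')).continuousAt.continuousWithinAt
    · rw [interior_Icc]
      intro x hx
      have hx' : x ∈ Icc a b := ⟨hax₀.trans hx.1.le, hx.2.le⟩
      exact ((hf x hx').div (hg x hx') (hgpos x hx').ne').differentiableWithinAt
    · rw [interior_Icc]
      intro x hx
      have hx' : x ∈ Ico a b := ⟨hax₀.trans hx.1.le, hx.2⟩
      have hxI : x ∈ Icc a b := hsub hx'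
      have hYx : Y x ≤ 0 := by
        by_contra hc
        push_neg at hc
        have : x ∈ S := Or.inr ⟨hx', hc.le⟩
        exact absurd (le_csSup hbddA this) (not_le.2 hx.1)
      have hd : HasDerivAt (fun x => f x / g x)
          ((deriv f x * g x - f x * deriv g x) / g x ^ 2) x :=
        (hf x hxI).hasDerivAt.div (hg x hxI).hasDerivAt (hgpos x hxI).ne'
      rw [hd.deriv]
      have hc : deriv f x / deriv g x * deriv g x = deriv f x :=
        div_mul_cancel₀ _ (hg'ne x hx')
      have hnum : deriv f x * g x - f x * deriv g x = deriv g x * Y x := by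
        simp only [hY_def, hh_def]
        linear_combination (-(g x)) * hc
      rw [hnum]
      apply div_nonpos_of_nonpos_of_nonneg
      · exact mul_nonpos_of_nonneg_of_nonpos (hg' x hx').le hYx
      · positivity
end

section
/- Let f, g be twice differentiable on [a,b] with f(a) = g(a) = 0, g > 0 on (a,b], and g' > 0 on [a,b]. Suppose there exists p ∈ (a,b) such that f'/g' is increasing on [a,p] and decreasing on [p,b]. If Y_{f,g}(b) ≥ 0, where Y_{f,g}(x) = (f'(x)/g'(x))·g(x) − f(x), then f/g is increasing on (a,b]. -/
/-!
Write `q = f' / g'` and `Y = q g - f`. By Cauchy's mean value theorem, for `x < y` there is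
`ξ ∈ (x, y)` with `f y - f x = q ξ (g y - g x)`, hence
`Y y - Y x = (q y - q ξ) (g y - g x) + (q y - q x) g x`.
As `g` is increasing and nonnegative, `Y` therefore increases where `q` increases and decreases
where `q` decreases. So `Y` increases on `[a, p]` and decreases on `[p, b]`; with `Y a = 0` and
`Y b ≥ 0` this gives `Y ≥ 0` on `[a, b]`. Finally `(f / g)' = g' Y / g² ≥ 0`.
-/

open Set

noncomputable def lhopitalY (f g : ℝ → ℝ) (x : ℝ) : ℝ :=
  deriv f x / deriv g x * g x - f x

section

variable {f g : ℝ → ℝ}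

lemma exists_lhopitalY_sub_eq {x y : ℝ} (hxy : x < y) (hf : ContinuousOn f (Icc x y))
    (hfd : DifferentiableOn ℝ f (Ioo x y)) (hg : ContinuousOn g (Icc x y))
    (hg' : ∀ ξ ∈ Ioo x y, deriv g ξ ≠ 0) :
    ∃ ξ ∈ Ioo x y, lhopitalY f g y - lhopitalY f g x =
      (deriv f y / deriv g y - deriv f ξ / deriv g ξ) * (g y - g x) +
        (deriv f y / deriv g y - deriv f x / deriv g x) * g x := by
  obtain ⟨ξ, hξ, hcauchy⟩ := exists_ratio_deriv_eq_ratio_slope f hxy hf hfd g hg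
    fun ξ hξ => (differentiableAt_of_deriv_ne_zero (hg' ξ hξ)).differentiableWithinAt
  have hslope : f y - f x = deriv f ξ / deriv g ξ * (g y - g x) := by
    field_simp [hg' ξ hξ]
    linarith
  refine ⟨ξ, hξ, ?_⟩
  unfold lhopitalY
  linear_combination -hslope

lemma lhopitalY_neg_left : lhopitalY (-f) g = -lhopitalY f g := by
  ext x
  simp only [lhopitalY, deriv.neg', Pi.neg_apply]
  ring

variable {u v : ℝ}

lemma lhopitalY_monotoneOn (hf : ContinuousOn f (Icc u v))
    (hfd : DifferentiableOn ℝ f (Ioo u v)) (hg : ContinuousOn g (Icc u v))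
    (hg' : ∀ x ∈ Ioo u v, 0 < deriv g x) (hgu : 0 ≤ g u)
    (hq : MonotoneOn (fun x => deriv f x / deriv g x) (Icc u v)) :
    MonotoneOn (lhopitalY f g) (Icc u v) := by
  have hg_mono : MonotoneOn g (Icc u v) :=
    (strictMonoOn_of_deriv_pos (convex_Icc u v) hg (by rwa [interior_Icc])).monotoneOn
  intro x hx y hy hxy
  rcases hxy.eq_or_lt with rfl | hxy
  · rfl
  have hsub : Icc x y ⊆ Icc u v := Icc_subset_Icc hx.1 hy.2
  obtain ⟨ξ, hξ, hY⟩ := exists_lhopitalY_sub_eq hxy (hf.mono hsub)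
    (hfd.mono (Ioo_subset_Ioo hx.1 hy.2)) (hg.mono hsub)
    fun ξ hξ => (hg' ξ ⟨hx.1.trans_lt hξ.1, hξ.2.trans_le hy.2⟩).ne'
  have hgx : 0 ≤ g x := hgu.trans (hg_mono ⟨le_rfl, hx.1.trans hx.2⟩ hx hx.1)
  have h₁ := mul_nonneg (sub_nonneg.2 (hq (hsub (Ioo_subset_Icc_self hξ)) hy hξ.2.le))
    (sub_nonneg.2 (hg_mono hx hy hxy.le))
  have h₂ := mul_nonneg (sub_nonneg.2 (hq hx hy hxy.le)) hgx
  linarith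

lemma lhopitalY_antitoneOn (hf : ContinuousOn f (Icc u v))
    (hfd : DifferentiableOn ℝ f (Ioo u v)) (hg : ContinuousOn g (Icc u v))
    (hg' : ∀ x ∈ Ioo u v, 0 < deriv g x) (hgu : 0 ≤ g u)
    (hq : AntitoneOn (fun x => deriv f x / deriv g x) (Icc u v)) :
    AntitoneOn (lhopitalY f g) (Icc u v) := by
  have hq_neg : MonotoneOn (fun x => deriv (-f) x / deriv g x) (Icc u v) := by
    simpa only [deriv.neg', neg_div] using hq.neg
  simpa only [lhopitalY_neg_left, Pi.neg_apply, neg_neg] using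
    (lhopitalY_monotoneOn (f := -f) hf.neg hfd.neg hg hg' hgu hq_neg).neg

lemma deriv_div_eq_mul_lhopitalY {x : ℝ} (hf : DifferentiableAt ℝ f x)
    (hg : DifferentiableAt ℝ g x) (hgx : g x ≠ 0) (hg'x : deriv g x ≠ 0) :
    deriv (fun y => f y / g y) x = deriv g x * lhopitalY f g x / g x ^ 2 := by
  rw [deriv_fun_div hf hg hgx, lhopitalY]
  field_simp

lemma monotoneOn_div_of_lhopitalY_nonneg {D : Set ℝ} (hD : Convex ℝ D)
    (hf : ∀ x ∈ D, DifferentiableAt ℝ f x) (hg : ∀ x ∈ D, DifferentiableAt ℝ g x)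
    (hgD : ∀ x ∈ D, g x ≠ 0) (hg' : ∀ x ∈ interior D, 0 < deriv g x)
    (hY : ∀ x ∈ interior D, 0 ≤ lhopitalY f g x) :
    MonotoneOn (fun x => f x / g x) D := by
  have hdiff : ∀ x ∈ D, DifferentiableAt ℝ (fun y => f y / g y) x :=
    fun x hx => (hf x hx).div (hg x hx) (hgD x hx)
  refine monotoneOn_of_deriv_nonneg hD (fun x hx => (hdiff x hx).continuousAt.continuousWithinAt)
    (fun x hx => (hdiff x (interior_subset hx)).differentiableWithinAt) fun x hx => ?_
  have hxD := interior_subset hx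
  rw [deriv_div_eq_mul_lhopitalY (hf x hxD) (hg x hxD) (hgD x hxD) (hg' x hx).ne']
  have := hg' x hx
  have := hY x hx
  positivity

end

lemma le_apply_of_monotoneOn_of_antitoneOn {α β : Type*} [LinearOrder α] [Preorder β]
    {h : α → β} {a p b x : α} {c : β} (hmono : MonotoneOn h (Icc a p))
    (hanti : AntitoneOn h (Icc p b)) (ha : c ≤ h a) (hb : c ≤ h b) (hap : a ≤ p) (hpb : p ≤ b)
    (hx : x ∈ Icc a b) : c ≤ h x := by
  rcases le_total x p with hxp | hpx
  · exact ha.trans (hmono ⟨le_rfl, hap⟩ ⟨hx.1, hxp⟩ hx.1)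
  · exact hb.trans (hanti ⟨hpx, hx.2⟩ ⟨hpb, le_rfl⟩ hx.2)

theorem third_kind_rule_increasing_general (a b : ℝ) (f g : ℝ → ℝ)
    (hf : ∀ x ∈ Icc a b, DifferentiableAt ℝ f x)
    (hg : ∀ x ∈ Icc a b, DifferentiableAt ℝ g x)
    (hfa : f a = 0) (hga : g a = 0)
    (hgpos : ∀ x ∈ Ioc a b, 0 < g x)
    (hg' : ∀ x ∈ Icc a b, 0 < deriv g x)
    (p : ℝ) (hp : p ∈ Ioo a b)
    (hmono : MonotoneOn (fun x => deriv f x / deriv g x) (Icc a p))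
    (hanti : AntitoneOn (fun x => deriv f x / deriv g x) (Icc p b))
    (hYb : 0 ≤ deriv f b / deriv g b * g b - f b) :
    MonotoneOn (fun x => f x / g x) (Ioc a b) := by
  have hfd : DifferentiableOn ℝ f (Ioo a b) := fun x hx =>
    (hf x (Ioo_subset_Icc_self hx)).differentiableWithinAt
  have hfc : ContinuousOn f (Icc a b) := fun x hx => (hf x hx).continuousAt.continuousWithinAt
  have hgc : ContinuousOn g (Icc a b) := fun x hx => (hg x hx).continuousAt.continuousWithinAt
  have hg'_Ioo : ∀ x ∈ Ioo a b, 0 < deriv g x := fun x hx => hg' x (Ioo_subset_Icc_self hx)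
  have hap : Icc a p ⊆ Icc a b := Icc_subset_Icc le_rfl hp.2.le
  have hpb : Icc p b ⊆ Icc a b := Icc_subset_Icc hp.1.le le_rfl
  have hYmono := lhopitalY_monotoneOn (hfc.mono hap) (hfd.mono (Ioo_subset_Ioo_right hp.2.le))
    (hgc.mono hap) (fun x hx => hg'_Ioo x (Ioo_subset_Ioo_right hp.2.le hx)) hga.ge hmono
  have hYanti := lhopitalY_antitoneOn (hfc.mono hpb) (hfd.mono (Ioo_subset_Ioo_left hp.1.le))
    (hgc.mono hpb) (fun x hx => hg'_Ioo x (Ioo_subset_Ioo_left hp.1.le hx))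
    (hgpos p ⟨hp.1, hp.2.le⟩).le hanti
  have hYa : lhopitalY f g a = 0 := by simp [lhopitalY, hfa, hga]
  refine monotoneOn_div_of_lhopitalY_nonneg (convex_Ioc a b)
    (fun x hx => hf x (Ioc_subset_Icc_self hx)) (fun x hx => hg x (Ioc_subset_Icc_self hx))
    (fun x hx => (hgpos x hx).ne') (by rwa [interior_Ioc]) ?_
  rw [interior_Ioc]
  intro x hx
  exact le_apply_of_monotoneOn_of_antitoneOn hYmono hYanti hYa.ge hYb hp.1.le hp.2.le
    (Ioo_subset_Icc_self hx)

theorem third_kind_rule_increasing (a b : ℝ) (hab : a < b) (f g : ℝ → ℝ)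
    (hf : ∀ x ∈ Icc a b, DifferentiableAt ℝ f x)
    (hg : ∀ x ∈ Icc a b, DifferentiableAt ℝ g x)
    (hf' : ∀ x ∈ Icc a b, DifferentiableAt ℝ (deriv f) x)
    (hg'' : ∀ x ∈ Icc a b, DifferentiableAt ℝ (deriv g) x)
    (hfa : f a = 0) (hga : g a = 0)
    (hgpos : ∀ x ∈ Ioc a b, 0 < g x)
    (hg' : ∀ x ∈ Icc a b, 0 < deriv g x)
    (p : ℝ) (hp : p ∈ Ioo a b)
    (hmono : MonotoneOn (fun x => deriv f x / deriv g x) (Icc a p))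
    (hanti : AntitoneOn (fun x => deriv f x / deriv g x) (Icc p b))
    (hYb : 0 ≤ deriv f b / deriv g b * g b - f b) :
    MonotoneOn (fun x => f x / g x) (Ioc a b) :=
  third_kind_rule_increasing_general a b f g hf hg hfa hga hgpos hg' p hp hmono hanti hYb
end

section
/- Let f, g be twice differentiable on [a,b] with f(a) = g(a) = 0, g > 0 on (a,b], and g' > 0 on [a,b]. Suppose there exists p ∈ (a,b) such that f'/g' is increasing on [a,p] and decreasing on [p,b]. If Y_{f,g}(b) ≤ 0, where Y_{f,g}(x) = (f'(x)/g'(x))·g(x) − f(x), then there exists x_p ∈ [a,b] such that f/g is increasing on (a,x_p] and decreasing on [x_p,b]. -/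
/-!
Write `r = f'/g'` and `Y = r g - f`. Cauchy's mean value theorem on `[x, y]` gives
`Y y - Y x = g y (r y - r c) + g x (r c - r x)` for some `c ∈ (x, y)`, so with `g ≥ 0` the
function `Y` inherits the monotonicity of `r`: it increases from `Y a = 0` on `[a, p]` and
decreases on `[p, b]`. Hence `Y` is nonnegative on `(a, x_p)` and nonpositive on `(x_p, b]`
for `x_p` the supremum of `{x ∈ [p, b] | 0 ≤ Y x}`, and `(f/g)' = Y g' / g²` has the same sign.
-/

open Set

/-- The function `Y_{f,g}` of the paper. -/
noncomputable def ratioDefect (f g : ℝ → ℝ) (x : ℝ) : ℝ :=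
  deriv f x / deriv g x * g x - f x

section

variable {f g : ℝ → ℝ}

theorem exists_ratioDefect_sub_eq {x y : ℝ} (hxy : x < y)
    (hf : ∀ z ∈ Icc x y, DifferentiableAt ℝ f z) (hg : ∀ z ∈ Icc x y, DifferentiableAt ℝ g z)
    (hg' : ∀ z ∈ Ioo x y, deriv g z ≠ 0) :
    ∃ c ∈ Ioo x y, ratioDefect f g y - ratioDefect f g x =
      g y * (deriv f y / deriv g y - deriv f c / deriv g c) +
        g x * (deriv f c / deriv g c - deriv f x / deriv g x) := by
  obtain ⟨c, hc, hcauchy⟩ := exists_ratio_deriv_eq_ratio_slope f hxy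
    (fun z hz => (hf z hz).continuousAt.continuousWithinAt)
    (fun z hz => (hf z (Ioo_subset_Icc_self hz)).differentiableWithinAt) g
    (fun z hz => (hg z hz).continuousAt.continuousWithinAt)
    (fun z hz => (hg z (Ioo_subset_Icc_self hz)).differentiableWithinAt)
  have hslope : f y - f x = deriv f c / deriv g c * (g y - g x) := by
    field_simp [hg' c hc]
    linarith
  refine ⟨c, hc, ?_⟩
  unfold ratioDefect
  linear_combination -hslope

variable {s : Set ℝ}

theorem monotoneOn_ratioDefect (hs : s.OrdConnected)
    (hf : ∀ x ∈ s, DifferentiableAt ℝ f x) (hg : ∀ x ∈ s, DifferentiableAt ℝ g x)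
    (hg' : ∀ x ∈ s, deriv g x ≠ 0) (hg₀ : ∀ x ∈ s, 0 ≤ g x)
    (hr : MonotoneOn (fun x => deriv f x / deriv g x) s) :
    MonotoneOn (ratioDefect f g) s := by
  intro x hx y hy hxy
  rcases hxy.eq_or_lt with rfl | hlt
  · exact le_rfl
  have hsub : Icc x y ⊆ s := hs.out hx hy
  obtain ⟨c, hc, hY⟩ := exists_ratioDefect_sub_eq hlt (fun z hz => hf z (hsub hz))
    (fun z hz => hg z (hsub hz)) (fun z hz => hg' z (hsub (Ioo_subset_Icc_self hz)))
  have hcs : c ∈ s := hsub (Ioo_subset_Icc_self hc)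
  have hxc := hr hx hcs hc.1.le
  have hcy := hr hcs hy hc.2.le
  nlinarith [mul_nonneg (hg₀ y hy) (sub_nonneg.2 hcy), mul_nonneg (hg₀ x hx) (sub_nonneg.2 hxc)]

theorem antitoneOn_ratioDefect (hs : s.OrdConnected)
    (hf : ∀ x ∈ s, DifferentiableAt ℝ f x) (hg : ∀ x ∈ s, DifferentiableAt ℝ g x)
    (hg' : ∀ x ∈ s, deriv g x ≠ 0) (hg₀ : ∀ x ∈ s, 0 ≤ g x)
    (hr : AntitoneOn (fun x => deriv f x / deriv g x) s) :
    AntitoneOn (ratioDefect f g) s := by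
  intro x hx y hy hxy
  rcases hxy.eq_or_lt with rfl | hlt
  · exact le_rfl
  have hsub : Icc x y ⊆ s := hs.out hx hy
  obtain ⟨c, hc, hY⟩ := exists_ratioDefect_sub_eq hlt (fun z hz => hf z (hsub hz))
    (fun z hz => hg z (hsub hz)) (fun z hz => hg' z (hsub (Ioo_subset_Icc_self hz)))
  have hcs : c ∈ s := hsub (Ioo_subset_Icc_self hc)
  have hxc := hr hx hcs hc.1.le
  have hcy := hr hcs hy hc.2.le
  nlinarith [mul_nonneg (hg₀ y hy) (sub_nonneg.2 hcy), mul_nonneg (hg₀ x hx) (sub_nonneg.2 hxc)]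

theorem hasDerivAt_div_ratioDefect {x : ℝ} (hf : DifferentiableAt ℝ f x)
    (hg : DifferentiableAt ℝ g x) (hgx : g x ≠ 0) (hg'x : deriv g x ≠ 0) :
    HasDerivAt (fun y => f y / g y) (ratioDefect f g x * deriv g x / g x ^ 2) x := by
  refine (hf.hasDerivAt.div hg.hasDerivAt hgx).congr_deriv ?_
  unfold ratioDefect
  field_simp

theorem monotoneOn_div_of_ratioDefect_nonneg (hs : Convex ℝ s)
    (hf : ∀ x ∈ s, DifferentiableAt ℝ f x) (hg : ∀ x ∈ s, DifferentiableAt ℝ g x)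
    (hg₀ : ∀ x ∈ s, g x ≠ 0) (hg' : ∀ x ∈ s, 0 < deriv g x)
    (hY : ∀ x ∈ interior s, 0 ≤ ratioDefect f g x) :
    MonotoneOn (fun x => f x / g x) s := by
  refine monotoneOn_of_deriv_nonneg hs
    (fun x hx => ((hf x hx).div (hg x hx) (hg₀ x hx)).continuousAt.continuousWithinAt)
    (fun x hx => ((hf x (interior_subset hx)).div (hg x (interior_subset hx))
      (hg₀ x (interior_subset hx))).differentiableWithinAt) fun x hx => ?_
  have hxs := interior_subset hx
  rw [(hasDerivAt_div_ratioDefect (hf x hxs) (hg x hxs) (hg₀ x hxs) (hg' x hxs).ne').deriv]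
  exact div_nonneg (mul_nonneg (hY x hx) (hg' x hxs).le) (sq_nonneg _)

theorem antitoneOn_div_of_ratioDefect_nonpos (hs : Convex ℝ s)
    (hf : ∀ x ∈ s, DifferentiableAt ℝ f x) (hg : ∀ x ∈ s, DifferentiableAt ℝ g x)
    (hg₀ : ∀ x ∈ s, g x ≠ 0) (hg' : ∀ x ∈ s, 0 < deriv g x)
    (hY : ∀ x ∈ interior s, ratioDefect f g x ≤ 0) :
    AntitoneOn (fun x => f x / g x) s := by
  refine antitoneOn_of_deriv_nonpos hs
    (fun x hx => ((hf x hx).div (hg x hx) (hg₀ x hx)).continuousAt.continuousWithinAt)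
    (fun x hx => ((hf x (interior_subset hx)).div (hg x (interior_subset hx))
      (hg₀ x (interior_subset hx))).differentiableWithinAt) fun x hx => ?_
  have hxs := interior_subset hx
  rw [(hasDerivAt_div_ratioDefect (hf x hxs) (hg x hxs) (hg₀ x hxs) (hg' x hxs).ne').deriv]
  exact div_nonpos_of_nonpos_of_nonneg (mul_nonpos_of_nonpos_of_nonneg (hY x hx)
    (hg' x hxs).le) (sq_nonneg _)

end

theorem AntitoneOn.exists_nonneg_nonpos {Y : ℝ → ℝ} {p b : ℝ} (hpb : p ≤ b)
    (hY : AntitoneOn Y (Icc p b)) :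
    ∃ c ∈ Icc p b, (∀ x ∈ Ico p c, 0 ≤ Y x) ∧ ∀ x ∈ Ioc c b, Y x ≤ 0 := by
  rcases lt_or_ge (Y p) 0 with hYp | hYp
  · refine ⟨p, left_mem_Icc.2 hpb, fun x hx => absurd hx.2 hx.1.not_gt, fun x hx => ?_⟩
    exact (hY (left_mem_Icc.2 hpb) ⟨hx.1.le, hx.2⟩ hx.1.le).trans hYp.le
  set S := {x ∈ Icc p b | 0 ≤ Y x}
  have hpS : p ∈ S := ⟨left_mem_Icc.2 hpb, hYp⟩
  have hSb : BddAbove S := ⟨b, fun x hx => hx.1.2⟩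
  refine ⟨sSup S, ⟨le_csSup hSb hpS, csSup_le ⟨p, hpS⟩ fun x hx => hx.1.2⟩, ?_, ?_⟩
  · intro x hx
    obtain ⟨z, hzS, hxz⟩ := exists_lt_of_lt_csSup ⟨p, hpS⟩ hx.2
    exact hzS.2.trans (hY ⟨hx.1, hxz.le.trans hzS.1.2⟩ hzS.1 hxz.le)
  · intro x hx
    by_contra! hYx
    exact (le_csSup hSb ⟨⟨(le_csSup hSb hpS).trans hx.1.le, hx.2⟩, hYx.le⟩).not_gt hx.1


theorem third_kind_rule_piecewise_general (a b : ℝ) (f g : ℝ → ℝ)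
    (hf : ∀ x ∈ Icc a b, DifferentiableAt ℝ f x)
    (hg : ∀ x ∈ Icc a b, DifferentiableAt ℝ g x)
    (hfa : f a = 0) (hga : g a = 0)
    (hgpos : ∀ x ∈ Ioc a b, 0 < g x)
    (hg' : ∀ x ∈ Icc a b, 0 < deriv g x)
    (p : ℝ) (hp : p ∈ Ioo a b)
    (hmono : MonotoneOn (fun x => deriv f x / deriv g x) (Icc a p))
    (hanti : AntitoneOn (fun x => deriv f x / deriv g x) (Icc p b)) :
    ∃ xp ∈ Icc a b,
      MonotoneOn (fun x => f x / g x) (Ioc a xp) ∧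
      AntitoneOn (fun x => f x / g x) (Icc xp b) := by
  have hap : Icc a p ⊆ Icc a b := Icc_subset_Icc_right hp.2.le
  have hpb : Icc p b ⊆ Icc a b := Icc_subset_Icc_left hp.1.le
  have hg₀ : ∀ x ∈ Icc a b, 0 ≤ g x := fun x hx =>
    hx.1.eq_or_lt.elim (fun h => h ▸ hga.ge) fun h => (hgpos x ⟨h, hx.2⟩).le
  have hYmono := monotoneOn_ratioDefect ordConnected_Icc (fun x hx => hf x (hap hx))
    (fun x hx => hg x (hap hx)) (fun x hx => (hg' x (hap hx)).ne') (fun x hx => hg₀ x (hap hx))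
    hmono
  have hYanti := antitoneOn_ratioDefect ordConnected_Icc (fun x hx => hf x (hpb hx))
    (fun x hx => hg x (hpb hx)) (fun x hx => (hg' x (hpb hx)).ne') (fun x hx => hg₀ x (hpb hx))
    hanti
  have hYa : ratioDefect f g a = 0 := by simp [ratioDefect, hfa, hga]
  obtain ⟨c, hc, hYpos, hYneg⟩ := hYanti.exists_nonneg_nonpos hp.2.le
  have hac : a < c := hp.1.trans_le hc.1
  have hcb : Ioc a c ⊆ Icc a b := fun x hx => ⟨hx.1.le, hx.2.trans hc.2⟩
  have hbc : Icc c b ⊆ Icc a b := Icc_subset_Icc_left hac.le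
  refine ⟨c, hpb hc, ?_, ?_⟩
  · refine monotoneOn_div_of_ratioDefect_nonneg (convex_Ioc a c) (fun x hx => hf x (hcb hx))
      (fun x hx => hg x (hcb hx)) (fun x hx => (hgpos x ⟨hx.1, hx.2.trans hc.2⟩).ne')
      (fun x hx => hg' x (hcb hx)) fun x hx => ?_
    rw [interior_Ioc] at hx
    rcases le_total x p with hxp | hxp
    · exact hYa ▸ hYmono (left_mem_Icc.2 hp.1.le) ⟨hx.1.le, hxp⟩ hx.1.le
    · exact hYpos x ⟨hxp, hx.2⟩
  · refine antitoneOn_div_of_ratioDefect_nonpos (convex_Icc c b) (fun x hx => hf x (hbc hx))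
      (fun x hx => hg x (hbc hx)) (fun x hx => (hgpos x ⟨hac.trans_le hx.1, hx.2⟩).ne')
      (fun x hx => hg' x (hbc hx)) fun x hx => ?_
    rw [interior_Icc] at hx
    exact hYneg x ⟨hx.1, hx.2.le⟩

theorem third_kind_rule_piecewise (a b : ℝ) (hab : a < b) (f g : ℝ → ℝ)
    (hf : ∀ x ∈ Icc a b, DifferentiableAt ℝ f x)
    (hg : ∀ x ∈ Icc a b, DifferentiableAt ℝ g x)
    (hf' : ∀ x ∈ Icc a b, DifferentiableAt ℝ (deriv f) x)
    (hg'' : ∀ x ∈ Icc a b, DifferentiableAt ℝ (deriv g) x)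
    (hfa : f a = 0) (hga : g a = 0)
    (hgpos : ∀ x ∈ Ioc a b, 0 < g x)
    (hg' : ∀ x ∈ Icc a b, 0 < deriv g x)
    (p : ℝ) (hp : p ∈ Ioo a b)
    (hmono : MonotoneOn (fun x => deriv f x / deriv g x) (Icc a p))
    (hanti : AntitoneOn (fun x => deriv f x / deriv g x) (Icc p b))
    (hYb : deriv f b / deriv g b * g b - f b ≤ 0) :
    ∃ xp ∈ Icc a b,
      MonotoneOn (fun x => f x / g x) (Ioc a xp) ∧
      AntitoneOn (fun x => f x / g x) (Icc xp b) :=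
  third_kind_rule_piecewise_general a b f g hf hg hfa hga hgpos hg' p hp hmono hanti
end

section
/- Discrete (nabla on ℤ) L'Hospital-type monotonicity rule: let (aₙ) and (bₙ) be real sequences with bₙ − bₙ₋₁ > 0 for all n ≥ 1, a₀ = b₀ = 0, and suppose the sequence n ↦ (aₙ − aₙ₋₁)/(bₙ − bₙ₋₁) is increasing in n (for n ≥ 1). Then the sequence n ↦ aₙ/bₙ is increasing for n ≥ 1. -/
lemma mediant_aux (p q d e : ℝ) (hq : 0 < q) (he : 0 < e) (h : p / q ≤ d / e) :
    p / q ≤ (p + d) / (q + e) ∧ (p + d) / (q + e) ≤ d / e := by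
  rw [div_le_div_iff₀ hq he] at h
  constructor
  · rw [div_le_div_iff₀ hq (by linarith)]
    nlinarith
  · rw [div_le_div_iff₀ (by linarith) he]
    nlinarith

theorem discrete_nabla_lhospital (a b : ℕ → ℝ)
    (hb : ∀ n : ℕ, 1 ≤ n → 0 < b n - b (n - 1))
    (ha0 : a 0 = 0) (hb0 : b 0 = 0)
    (hmono : ∀ m n : ℕ, 1 ≤ m → m ≤ n →
      (a m - a (m - 1)) / (b m - b (m - 1)) ≤ (a n - a (n - 1)) / (b n - b (n - 1))) :
    ∀ m n : ℕ, 1 ≤ m → m ≤ n → a m / b m ≤ a n / b n := by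
  have key : ∀ n : ℕ, 1 ≤ n → 0 < b n ∧ a n / b n ≤ (a n - a (n - 1)) / (b n - b (n - 1)) := by
    intro n hn
    induction n with
    | zero => omega
    | succ k ih =>
      rcases Nat.eq_or_lt_of_le hn with h1 | h1
      · have := hb 1 le_rfl
        simp at h1
        subst h1
        simp [ha0, hb0] at this ⊢
        exact this
      · have hk : 1 ≤ k := by omega
        obtain ⟨hbk, hrk⟩ := ih hk
        have he : 0 < b (k + 1) - b k := by
          have := hb (k + 1) (by omega)
          simpa using this
        have hc : (a k - a (k - 1)) / (b k - b (k - 1)) ≤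
            (a (k + 1) - a k) / (b (k + 1) - b k) := by
          have := hmono k (k + 1) hk (by omega)
          simpa using this
        have h := mediant_aux (a k) (b k) (a (k + 1) - a k) (b (k + 1) - b k) hbk he
          (le_trans hrk hc)
        constructor
        · linarith
        · have h2 := h.2
          simp only [Nat.add_sub_cancel]
          convert h2 using 2 <;> ring
  have adj : ∀ n : ℕ, 1 ≤ n → a n / b n ≤ a (n + 1) / b (n + 1) := by
    intro n hn
    obtain ⟨hbn, hrn⟩ := key n hn
    have he : 0 < b (n + 1) - b n := by simpa using hb (n + 1) (by omega)
    have hc : (a n - a (n - 1)) / (b n - b (n - 1)) ≤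
        (a (n + 1) - a n) / (b (n + 1) - b n) := by
      simpa using hmono n (n + 1) hn (by omega)
    have h := mediant_aux (a n) (b n) (a (n + 1) - a n) (b (n + 1) - b n) hbn he
      (le_trans hrn hc)
    have h1 := h.1
    convert h1 using 2 <;> ring
  intro m n hm hmn
  induction n, hmn using Nat.le_induction with
  | base => exact le_refl _
  | succ n hmn ih => exact le_trans ih (adj n (by omega))
end

section
/- Let f, g : ℝ → ℝ be continuous on [a,b] and differentiable on (a,b) with g' nonvanishing on (a,b), and suppose g is strictly increasing on [a,b]. If f'/g' is increasing on (a,b), then for all a < x < y ≤ b: (f(x) − f(a))·(g(y) − g(a)) ≤ (f(y) − f(a))·(g(x) − g(a)). -/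
open Set

theorem lhospital_cross_multiplied (a b : ℝ) (hab : a < b) (f g : ℝ → ℝ)
    (hfc : ContinuousOn f (Icc a b)) (hgc : ContinuousOn g (Icc a b))
    (hf : ∀ x ∈ Ioo a b, DifferentiableAt ℝ f x)
    (hg : ∀ x ∈ Ioo a b, DifferentiableAt ℝ g x)
    (hg' : ∀ x ∈ Ioo a b, deriv g x ≠ 0)
    (hmono : MonotoneOn (fun x => deriv f x / deriv g x) (Ioo a b))
    (hgs : StrictMonoOn g (Icc a b)) :
    ∀ x y : ℝ, a < x → x < y → y ≤ b →
      (f x - f a) * (g y - g a) ≤ (f y - f a) * (g x - g a) := by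
  intro x y hax hxy hyb
  have hxb : x < b := lt_of_lt_of_le hxy hyb
  have hxIcc : x ∈ Icc a b := ⟨hax.le, hxb.le⟩
  have hyIcc : y ∈ Icc a b := ⟨(hax.trans hxy).le, hyb⟩
  have haIcc : a ∈ Icc a b := ⟨le_refl a, hab.le⟩
  -- Cauchy MVT on [a, x]
  have hsub1 : Icc a x ⊆ Icc a b := Icc_subset_Icc (le_refl a) hxb.le
  have hsub1' : Ioo a x ⊆ Ioo a b := Ioo_subset_Ioo (le_refl a) hxb.le
  have hsub2 : Icc x y ⊆ Icc a b := Icc_subset_Icc hax.le hyb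
  have hsub2' : Ioo x y ⊆ Ioo a b := Ioo_subset_Ioo hax.le hyb
  obtain ⟨c, hc, hc1⟩ := exists_ratio_deriv_eq_ratio_slope f hax (hfc.mono hsub1)
    (fun t ht => (hf t (hsub1' ht)).differentiableWithinAt) g (hgc.mono hsub1)
    (fun t ht => (hg t (hsub1' ht)).differentiableWithinAt)
  obtain ⟨d, hd, hd1⟩ := exists_ratio_deriv_eq_ratio_slope
    (f := fun t => f t) (a := x) (b := y) hxy (hfc.mono hsub2)
    (fun t ht => (hf t (hsub2' ht)).differentiableWithinAt) (g := g) (hgc.mono hsub2)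
    (fun t ht => (hg t (hsub2' ht)).differentiableWithinAt)
  have hcab : c ∈ Ioo a b := hsub1' hc
  have hdab : d ∈ Ioo a b := hsub2' hd
  have hB : 0 < g x - g a := sub_pos.2 (hgs haIcc hxIcc hax)
  have hD : 0 < g y - g x := sub_pos.2 (hgs hxIcc hyIcc hxy)
  have hA : f x - f a = (g x - g a) * (deriv f c / deriv g c) := by
    field_simp [hg' c hcab]
    linarith [hc1]
  have hC : f y - f x = (g y - g x) * (deriv f d / deriv g d) := by
    field_simp [hg' d hdab]
    linarith [hd1]
  have hr : deriv f c / deriv g c ≤ deriv f d / deriv g d :=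
    hmono hcab hdab (hc.2.trans hd.1).le
  -- A*D ≤ C*B, then mediant
  have key : (f x - f a) * (g y - g x) ≤ (f y - f x) * (g x - g a) := by
    rw [hA, hC]
    have := mul_le_mul_of_nonneg_left hr (le_of_lt (mul_pos hB hD))
    nlinarith
  nlinarith
end
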